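/- arXiv:1708.01478 — 6 statements merged into one kernel-verified Lean document; each statement's English description precedes it below -/
import Mathlib

section
/- Let Φ : ℝ₊ → ℝ₊ be a nondecreasing surjection and μ a σ-finite measure. If 0 ≤ f_n ↑ f pointwise μ-a.e., then ρ_{Φ,μ}(f_n) ↑ ρ_{Φ,μ}(f), where ρ_{Φ,μ}(f) = inf{λ > 0 : ∫ Φ(|f|/λ)(1/λ) dμ ≤ 1}. -/
open scoped ENNReal NNReal
open MeasureTheory Set Filter

/-- The orlGauge (F-norm) `ρ_{Φ,μ}(f) = inf{λ>0 : ∫ Φ(|f|/λ)(1/λ) dμ ≤ 1}`, with `inf ∅ = ∞`. -/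
noncomputable def orlGauge {X : Type*} [MeasurableSpace X] (μ : Measure X)
    (Φ : ℝ → ℝ) (f : X → ℝ) : ℝ≥0∞ :=
  sInf ((fun l : ℝ => ENNReal.ofReal l) ''
    {l : ℝ | 0 < l ∧ ∫⁻ x, ENNReal.ofReal (Φ (|f x| / l)) ∂μ ≤ ENNReal.ofReal l})

theorem stmt1 {X : Type*} [MeasurableSpace X] (μ : Measure X) [SigmaFinite μ]
    (Φ : ℝ → ℝ) (hΦmono : MonotoneOn Φ (Ioi 0)) (hΦsurj : SurjOn Φ (Ioi 0) (Ioi 0))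
    (hΦ0 : Φ 0 = 0)
    (f : ℕ → X → ℝ) (F : X → ℝ) (hmeas : ∀ n, Measurable (f n)) (hF : Measurable F)
    (hnonneg : ∀ᵐ x ∂μ, ∀ n, 0 ≤ f n x)
    (hmono : ∀ᵐ x ∂μ, Monotone fun n => f n x)
    (htend : ∀ᵐ x ∂μ, Tendsto (fun n => f n x) atTop (nhds (F x))) :
    Monotone (fun n => orlGauge μ Φ (f n)) ∧
      Tendsto (fun n => orlGauge μ Φ (f n)) atTop (nhds (orlGauge μ Φ F)) := by
  classical
  set Ψ : ℝ → ℝ := fun t => if t ≤ 0 then 0 else max (Φ t) 0 with hΨdef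
  have hΨnonneg : ∀ t, 0 ≤ Ψ t := by
    intro t
    by_cases ht : t ≤ 0 <;> simp [Ψ, ht]
  have hΨmono : Monotone Ψ := by
    intro s t hst
    by_cases hs : s ≤ 0
    · by_cases ht : t ≤ 0
      · simp [Ψ, hs, ht]
      · simp only [Ψ, if_pos hs, if_neg ht]
        exact le_max_right _ _
    · have ht : ¬ t ≤ 0 := fun h => hs (hst.trans h)
      simp only [Ψ, if_neg hs, if_neg ht]
      exact max_le_max (hΦmono (mem_Ioi.2 (lt_of_not_ge hs)) (mem_Ioi.2 (lt_of_not_ge ht)) hst)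
        le_rfl
  have hΨmeas : Measurable Ψ := hΨmono.measurable
  have hΨeq : ∀ t : ℝ, 0 ≤ t → ENNReal.ofReal (Φ t) = ENNReal.ofReal (Ψ t) := by
    intro t ht
    rcases eq_or_lt_of_le ht with h | h
    · simp [Ψ, ← h, hΦ0]
    · simp only [Ψ, if_neg (not_le.2 h)]
      rcases le_or_gt (Φ t) 0 with h' | h'
      · rw [max_eq_right h', ENNReal.ofReal_eq_zero.2 h', ENNReal.ofReal_zero]
      · rw [max_eq_left h'.le]
  -- rewriting the integrand
  have hint : ∀ (g : X → ℝ) (l : ℝ), 0 < l →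
      (∫⁻ x, ENNReal.ofReal (Φ (|g x| / l)) ∂μ) = ∫⁻ x, ENNReal.ofReal (Ψ (|g x| / l)) ∂μ :=
    fun g l hl => lintegral_congr fun x => hΨeq _ (div_nonneg (abs_nonneg _) hl.le)
  -- monotonicity of the gauge
  have hgauge_mono : ∀ g h : X → ℝ, (∀ᵐ x ∂μ, |g x| ≤ |h x|) →
      orlGauge μ Φ g ≤ orlGauge μ Φ h := by
    intro g h hgh
    apply sInf_le_sInf
    rintro - ⟨l, ⟨hl, hinth⟩, rfl⟩
    refine ⟨l, ⟨hl, ?_⟩, rfl⟩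
    rw [hint g l hl]
    rw [hint h l hl] at hinth
    refine le_trans (lintegral_mono_ae ?_) hinth
    filter_upwards [hgh] with x hx
    exact ENNReal.ofReal_le_ofReal (hΨmono (by gcongr))
  -- a.e. comparisons
  have hfF : ∀ᵐ x ∂μ, ∀ n, f n x ≤ F x := by
    filter_upwards [hmono, htend] with x hm ht
    exact fun n => ge_of_tendsto ht (Filter.eventually_atTop.2 ⟨n, fun m hmn => hm hmn⟩)
  have hFle : ∀ n, ∀ᵐ x ∂μ, |f n x| ≤ |F x| := by
    intro n
    filter_upwards [hnonneg, hfF] with x h0 hle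
    rw [abs_of_nonneg (h0 n), abs_of_nonneg ((h0 0).trans (hle 0))]
    exact hle n
  have hMon : Monotone (fun n => orlGauge μ Φ (f n)) := by
    intro n m hnm
    refine hgauge_mono _ _ ?_
    filter_upwards [hnonneg, hmono] with x h0 hm
    rw [abs_of_nonneg (h0 n), abs_of_nonneg (h0 m)]
    exact hm hnm
  refine ⟨hMon, ?_⟩
  -- the key inequality
  have key : orlGauge μ Φ F ≤ ⨆ n, orlGauge μ Φ (f n) := by
    refine le_of_forall_gt_imp_ge_of_dense fun c hc => ?_
    obtain ⟨l, hl0, hLl, hlc⟩ := (ENNReal.lt_iff_exists_real_btwn).1 hc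
    have hlpos : 0 < l := by
      rcases lt_or_ge 0 l with h | h
      · exact h
      · exact absurd hLl (by simp [ENNReal.ofReal_eq_zero.2 h])
    -- l is admissible for every f n
    have hadm : ∀ n, (∫⁻ x, ENNReal.ofReal (Ψ (|f n x| / l)) ∂μ) ≤ ENNReal.ofReal l := by
      intro n
      have hlt : orlGauge μ Φ (f n) < ENNReal.ofReal l := lt_of_le_of_lt (le_iSup (fun n => orlGauge μ Φ (f n)) n) hLl
      obtain ⟨-, ⟨l', ⟨hl'0, hintn⟩, rfl⟩, hl'l⟩ := sInf_lt_iff.1 hlt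
      have hl'le : l' ≤ l := ((ENNReal.ofReal_lt_ofReal_iff hlpos).1 hl'l).le
      rw [hint _ _ hl'0] at hintn
      calc (∫⁻ x, ENNReal.ofReal (Ψ (|f n x| / l)) ∂μ)
          ≤ ∫⁻ x, ENNReal.ofReal (Ψ (|f n x| / l')) ∂μ := by
            refine lintegral_mono fun x => ENNReal.ofReal_le_ofReal (hΨmono ?_)
            exact div_le_div_of_nonneg_left (abs_nonneg _) hl'0 hl'le |>.trans_eq rfl
        _ ≤ ENNReal.ofReal l' := hintn
        _ ≤ ENNReal.ofReal l := ENNReal.ofReal_le_ofReal hl'le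
    -- show l is admissible for F
    have hintF : (∫⁻ x, ENNReal.ofReal (Φ (|F x| / l)) ∂μ) ≤ ENNReal.ofReal l := by
      rw [hint F l hlpos]
      have hmeas' : ∀ n, AEMeasurable (fun x => ENNReal.ofReal (Ψ (|f n x| / l))) μ :=
        fun n => ((hΨmeas.comp ((hmeas n).abs.div_const l)).ennreal_ofReal).aemeasurable
      have haemono : ∀ᵐ x ∂μ, Monotone fun n => ENNReal.ofReal (Ψ (|f n x| / l)) := by
        filter_upwards [hnonneg, hmono] with x h0 hm
        intro n m hnm
        refine ENNReal.ofReal_le_ofReal (hΨmono ?_)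
        rw [abs_of_nonneg (h0 n), abs_of_nonneg (h0 m)]
        gcongr
        exact hm hnm
      have hclaim : ∀ᵐ x ∂μ, ENNReal.ofReal (Ψ (|F x| / l)) ≤
          ⨆ n, ENNReal.ofReal (Ψ (|f n x| / l)) := by
        filter_upwards [hnonneg, hmono, htend, hfF] with x h0 hm ht hle
        have hF0 : 0 ≤ F x := (h0 0).trans (hle 0)
        rw [abs_of_nonneg hF0]
        rcases eq_or_lt_of_le hF0 with hF0' | hF0'
        · rw [← hF0', show (0:ℝ)/l = 0 by simp, show Ψ 0 = 0 by simp [Ψ]]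
          simp
        · set a := F x / l with ha
          have hapos : 0 < a := div_pos hF0' hlpos
          rcases le_or_gt (Φ a) 0 with hΦa | hΦa
          · have : Ψ a = 0 := by simp only [Ψ, if_neg (not_le.2 hapos)]; exact max_eq_right hΦa
            rw [this]; simp
          · have hΨa : Ψ a = Φ a := by
              simp only [Ψ, if_neg (not_le.2 hapos)]; exact max_eq_left hΦa.le
            rw [hΨa]
            set c := Φ a with hcdef
            refine ENNReal.le_of_forall_pos_le_add fun ε hε hS => ?_
            rcases le_or_gt c ε with hcε | hcε
            · calc ENNReal.ofReal c ≤ ENNReal.ofReal ε := ENNReal.ofReal_le_ofReal hcε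
                _ = (ε : ℝ≥0∞) := ENNReal.ofReal_coe_nnreal
                _ ≤ _ + (ε : ℝ≥0∞) := le_add_self
            · obtain ⟨t, ht0, hΦt⟩ := hΦsurj (mem_Ioi.2 (by
                have : (0:ℝ) < ε := hε
                linarith : (0:ℝ) < c - ε))
              have hta : t < a := by
                by_contra hta
                push_neg at hta
                have := hΦmono (mem_Ioi.2 hapos) ht0 hta
                rw [hΦt] at this
                have : (0:ℝ) < ε := hε
                linarith
              have htendq : Tendsto (fun n => f n x / l) atTop (nhds a) := ht.div_const l
              obtain ⟨n, hn⟩ := (htendq.eventually (eventually_gt_nhds hta)).exists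
              have hΨn : c - ε ≤ Ψ (f n x / l) := by
                have h1 : Ψ t ≤ Ψ (f n x / l) := hΨmono hn.le
                have h2 : Ψ t = c - ε := by
                  simp only [Ψ, if_neg (not_le.2 (mem_Ioi.1 ht0))]
                  rw [hΦt]
                  exact max_eq_left (by
                    have : (0:ℝ) < ε := hε
                    linarith)
                rw [h2] at h1; exact h1
              calc ENNReal.ofReal c = ENNReal.ofReal ((c - ε) + ε) := by ring_nf
                _ ≤ ENNReal.ofReal (c - ε) + ENNReal.ofReal ε := ENNReal.ofReal_add_le
                _ = ENNReal.ofReal (c - ε) + (ε : ℝ≥0∞) := by rw [ENNReal.ofReal_coe_nnreal]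
                _ ≤ (⨆ m, ENNReal.ofReal (Ψ (|f m x| / l))) + (ε : ℝ≥0∞) := by
                    gcongr
                    refine le_trans (ENNReal.ofReal_le_ofReal hΨn) ?_
                    rw [← abs_of_nonneg (h0 n)]
                    exact le_iSup (fun m => ENNReal.ofReal (Ψ (|f m x| / l))) n
      calc (∫⁻ x, ENNReal.ofReal (Ψ (|F x| / l)) ∂μ)
          ≤ ∫⁻ x, ⨆ n, ENNReal.ofReal (Ψ (|f n x| / l)) ∂μ := lintegral_mono_ae hclaim
        _ = ⨆ n, ∫⁻ x, ENNReal.ofReal (Ψ (|f n x| / l)) ∂μ := lintegral_iSup' hmeas' haemono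
        _ ≤ ENNReal.ofReal l := iSup_le hadm
    have : orlGauge μ Φ F ≤ ENNReal.ofReal l := sInf_le ⟨l, ⟨hlpos, hintF⟩, rfl⟩
    exact this.trans hlc.le
  have hEq : (⨆ n, orlGauge μ Φ (f n)) = orlGauge μ Φ F :=
    le_antisymm (iSup_le fun n => hgauge_mono _ _ (hFle n)) key
  rw [← hEq]
  exact tendsto_atTop_iSup hMon
end

section
/- Let t, u, v, w be weights on ℝ₊, let Φ₁, Φ₂ be nondecreasing surjections of ℝ₊, and let T : S(ℝ₊) → M(ℝ₊) be positively homogeneous (|T(cf)| = |c||Tf|). Then the modular inequality ∫ Φ₁(t(x)|Tf(x)|) w(x) dx ≤ K ∫ Φ₂(K u(y)|f(y)|) v(y) dy (K independent of f) holds if and only if the family of gauge inequalities ρ_{Φ₁,t,εw}(Tf) ≤ C ρ_{Φ₂,u,εv}(f) holds with C independent of both f and ε > 0, where ρ_{Φ,u,εv}(f) = inf{λ > 0 : ∫ Φ(u(y)|f(y)|/λ)(ε/λ) v(y) dy ≤ 1}. -/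
open scoped ENNReal NNReal
open MeasureTheory Set

/-!
A level `λ > 0` is admissible for `ρ_{Φ,u,εv}(f)` iff `(ε/λ) ∫ Φ(u|f/λ|) v ≤ 1`, so both
inequalities only compare modulars of rescaled functions. If `λ` is admissible for `f`, the
modular inequality applied to `f / (Kλ)` (homogeneity of `T`) shows that `Kλ` is admissible for
`Tf`. Conversely, if `2Cε ∫ Φ₂(2C u|f|) v ≤ 1` then `1/(2C)` is admissible for `f`, hence `Tf`
has an admissible level `λ < 1`, and monotonicity of `Φ₁` gives `ε ∫ Φ₁(t|Tf|) w ≤ 1`; as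
`ε > 0` is arbitrary, `∫ Φ₁(t|Tf|) w ≤ 2C ∫ Φ₂(2C u|f|) v`.
-/

/-- The weighted gauge `ρ_{Φ,u,εv}(f) = inf{λ>0 : ∫ Φ(u|f|/λ)(ε/λ)v ≤ 1}`, `inf ∅ = ∞`. -/
noncomputable def wgauge (Φ : ℝ → ℝ) (u v : ℝ → ℝ) (ε : ℝ) (f : ℝ → ℝ) : ℝ≥0∞ :=
  sInf ((fun l : ℝ => ENNReal.ofReal l) ''
    {l : ℝ | 0 < l ∧
      ∫⁻ y in Ioi (0:ℝ), ENNReal.ofReal (Φ (u y * |f y| / l) * (ε / l) * v y) ≤ 1})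

/-- Simple measurable functions on `ℝ₊`. -/
def IsSimple (f : ℝ → ℝ) : Prop := Measurable f ∧ (Set.range f).Finite

theorem ENNReal.le_of_forall_pos_mul_ofReal_le_one {a b : ℝ≥0∞}
    (h : ∀ ε : ℝ, 0 < ε → b * ENNReal.ofReal ε ≤ 1 → a * ENNReal.ofReal ε ≤ 1) : a ≤ b := by
  by_contra! hba
  obtain ⟨c, hbc, hca⟩ := ENNReal.lt_iff_exists_nnreal_btwn.1 hba
  have hc : (c : ℝ≥0∞) ≠ 0 := (hbc.trans_le' bot_le).ne'
  have hct : (c : ℝ≥0∞) ≠ ⊤ := ENNReal.coe_ne_top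
  have hinv : ENNReal.ofReal (c : ℝ)⁻¹ = (c : ℝ≥0∞)⁻¹ := by
    rw [← NNReal.coe_inv, ENNReal.ofReal_coe_nnreal, ENNReal.coe_inv (by simpa using hc)]
  have hle := h (c : ℝ)⁻¹ (by simpa [pos_iff_ne_zero] using hc)
  rw [hinv, ENNReal.mul_inv_le_iff hc hct, ENNReal.mul_inv_le_iff hc hct, one_mul] at hle
  exact hca.not_ge (hle hbc.le)

theorem ENNReal.sInf_ofReal_image_le_mul {S S' : Set ℝ} {c : ℝ} (hc : 0 < c)
    (h : ∀ l ∈ S', c * l ∈ S) :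
    sInf (ENNReal.ofReal '' S) ≤ ENNReal.ofReal c * sInf (ENNReal.ofReal '' S') := by
  have hc₀ : ENNReal.ofReal c ≠ 0 := by simpa using hc
  rw [sInf_image, sInf_image, ENNReal.mul_iInf_of_ne hc₀ ENNReal.ofReal_ne_top]
  refine le_iInf fun l => ?_
  rw [ENNReal.mul_iInf_of_ne hc₀ ENNReal.ofReal_ne_top]
  refine le_iInf fun hl => ?_
  rw [← ENNReal.ofReal_mul hc.le]
  exact iInf₂_le _ (h l hl)

noncomputable def modular (Φ u v : ℝ → ℝ) (f : ℝ → ℝ) : ℝ≥0∞ :=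
  ∫⁻ y in Ioi (0:ℝ), ENNReal.ofReal (Φ (u y * |f y|) * v y)

section Modular

variable {Φ u v : ℝ → ℝ}

theorem modular_congr_abs {f g : ℝ → ℝ} (h : ∀ y, |f y| = |g y|) :
    modular Φ u v f = modular Φ u v g := by
  simp only [modular, h]

theorem modular_const_mul {c : ℝ} (hc : 0 ≤ c) (f : ℝ → ℝ) :
    modular Φ u v (fun y => c * f y) =
      ∫⁻ y in Ioi (0:ℝ), ENNReal.ofReal (Φ (c * (u y * |f y|)) * v y) := by
  simp only [modular, abs_mul, abs_of_nonneg hc, mul_left_comm]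

theorem modular_le_modular_const_mul (hΦ : MonotoneOn Φ (Ioi 0))
    (hu : ∀ y ∈ Ioi (0:ℝ), 0 ≤ u y) (hv : ∀ y ∈ Ioi (0:ℝ), 0 ≤ v y)
    (f : ℝ → ℝ) {c : ℝ} (hc : 1 ≤ c) :
    modular Φ u v f ≤ modular Φ u v (fun y => c * f y) := by
  rw [modular_const_mul (zero_le_one.trans hc)]
  refine setLIntegral_mono' measurableSet_Ioi fun y hy => ENNReal.ofReal_le_ofReal ?_
  refine mul_le_mul_of_nonneg_right ?_ (hv y hy)
  -- `Φ` is monotone only on `(0, ∞)`, so the point where `u y * |f y| = 0` is split off.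
  rcases (mul_nonneg (hu y hy) (abs_nonneg (f y))).eq_or_lt with h0 | h0
  · simp [← h0]
  · exact hΦ h0 (mul_pos (zero_lt_one.trans_le hc) h0) (le_mul_of_one_le_left h0.le hc)

theorem lintegral_wgauge_eq_mul_modular {ε l : ℝ} (hε : 0 ≤ ε) (hl : 0 < l) (f : ℝ → ℝ) :
    ∫⁻ y in Ioi (0:ℝ), ENNReal.ofReal (Φ (u y * |f y| / l) * (ε / l) * v y) =
      ENNReal.ofReal (ε / l) * modular Φ u v (fun y => l⁻¹ * f y) := by
  rw [modular_const_mul (inv_nonneg.2 hl.le), ← lintegral_const_mul' _ _ ENNReal.ofReal_ne_top]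
  refine lintegral_congr fun y => ?_
  rw [← ENNReal.ofReal_mul (div_nonneg hε hl.le)]
  ring_nf

end Modular

section Gauge

variable {Φ u v : ℝ → ℝ} {ε : ℝ}

theorem wgauge_le_ofReal (hε : 0 ≤ ε) {l : ℝ} (hl : 0 < l) {f : ℝ → ℝ}
    (h : ENNReal.ofReal (ε / l) * modular Φ u v (fun y => l⁻¹ * f y) ≤ 1) :
    wgauge Φ u v ε f ≤ ENNReal.ofReal l :=
  sInf_le ⟨l, ⟨hl, by rwa [lintegral_wgauge_eq_mul_modular hε hl]⟩, rfl⟩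

theorem exists_lt_of_wgauge_lt_ofReal (hε : 0 ≤ ε) {f : ℝ → ℝ} {r : ℝ}
    (h : wgauge Φ u v ε f < ENNReal.ofReal r) :
    ∃ l, 0 < l ∧ l < r ∧
      ENNReal.ofReal (ε / l) * modular Φ u v (fun y => l⁻¹ * f y) ≤ 1 := by
  obtain ⟨_, ⟨l, ⟨hl, hint⟩, rfl⟩, hlr⟩ := sInf_lt_iff.1 h
  rw [lintegral_wgauge_eq_mul_modular hε hl] at hint
  exact ⟨l, hl, (ENNReal.ofReal_lt_ofReal_iff'.1 hlr).1, hint⟩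

theorem wgauge_le_mul_wgauge {Ψ t w : ℝ → ℝ} {f g : ℝ → ℝ} (hε : 0 ≤ ε) {c : ℝ}
    (hc : 0 < c)
    (h : ∀ l > 0, ENNReal.ofReal (ε / l) * modular Ψ t w (fun y => l⁻¹ * g y) ≤ 1 →
      ENNReal.ofReal (ε / (c * l)) * modular Φ u v (fun y => (c * l)⁻¹ * f y) ≤ 1) :
    wgauge Φ u v ε f ≤ ENNReal.ofReal c * wgauge Ψ t w ε g := by
  refine ENNReal.sInf_ofReal_image_le_mul hc fun l ⟨hl, hint⟩ => ⟨mul_pos hc hl, ?_⟩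
  rw [lintegral_wgauge_eq_mul_modular hε hl] at hint
  rw [lintegral_wgauge_eq_mul_modular hε (mul_pos hc hl)]
  exact h l hl hint

end Gauge

section ModularGauge

variable {Φ₁ Φ₂ t u v w : ℝ → ℝ}

theorem wgauge_le_mul_wgauge_of_modular_le {S : (ℝ → ℝ) → Prop}
    (hS : ∀ (c : ℝ) (f : ℝ → ℝ), S f → S (fun y => c * f y)) {T : (ℝ → ℝ) → (ℝ → ℝ)}
    (hhom : ∀ (c : ℝ) (f : ℝ → ℝ) (x : ℝ), |T (fun y => c * f y) x| = |c| * |T f x|)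
    {K : ℝ} (hK : 0 < K)
    (H : ∀ f, S f →
      modular Φ₁ t w (T f) ≤ ENNReal.ofReal K * modular Φ₂ u v (fun y => K * f y))
    {ε : ℝ} (hε : 0 ≤ ε) {f : ℝ → ℝ} (hf : S f) :
    wgauge Φ₁ t w ε (T f) ≤ ENNReal.ofReal K * wgauge Φ₂ u v ε f := by
  refine wgauge_le_mul_wgauge hε hK fun l hl hint => ?_
  have hKl : 0 < K * l := mul_pos hK hl
  set g : ℝ → ℝ := fun y => (K * l)⁻¹ * f y
  have hTg : modular Φ₁ t w (fun x => (K * l)⁻¹ * T f x) = modular Φ₁ t w (T g) :=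
    modular_congr_abs fun x => by rw [hhom, abs_mul, abs_of_pos (inv_pos.2 hKl)]
  have hKg : (fun y => K * g y) = fun y => l⁻¹ * f y := by
    funext y
    simp only [g]
    field_simp
  calc ENNReal.ofReal (ε / (K * l)) * modular Φ₁ t w (fun x => (K * l)⁻¹ * T f x)
      = ENNReal.ofReal (ε / (K * l)) * modular Φ₁ t w (T g) := by rw [hTg]
    _ ≤ ENNReal.ofReal (ε / (K * l)) *
          (ENNReal.ofReal K * modular Φ₂ u v (fun y => K * g y)) := by
      gcongr
      exact H g (hS _ _ hf)
    _ = ENNReal.ofReal (ε / l) * modular Φ₂ u v (fun y => l⁻¹ * f y) := by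
      rw [hKg, ← mul_assoc, ← ENNReal.ofReal_mul (by positivity)]
      congr 2
      field_simp
    _ ≤ 1 := hint

theorem modular_le_of_wgauge_le (hΦ₁ : MonotoneOn Φ₁ (Ioi 0))
    (ht : ∀ x ∈ Ioi (0:ℝ), 0 ≤ t x) (hw : ∀ x ∈ Ioi (0:ℝ), 0 ≤ w x) {C : ℝ} (hC : 0 < C)
    {f g : ℝ → ℝ} (h : ∀ ε > 0, wgauge Φ₁ t w ε g ≤ ENNReal.ofReal C * wgauge Φ₂ u v ε f) :
    modular Φ₁ t w g ≤ ENNReal.ofReal (2 * C) * modular Φ₂ u v (fun y => 2 * C * f y) := by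
  refine ENNReal.le_of_forall_pos_mul_ofReal_le_one fun ε hε hI => ?_
  have hf : wgauge Φ₂ u v ε f ≤ ENNReal.ofReal (2 * C)⁻¹ := by
    refine wgauge_le_ofReal hε.le (by positivity) ?_
    rwa [inv_inv, div_inv_eq_mul, mul_comm ε, ENNReal.ofReal_mul (by positivity), mul_right_comm]
  have hg : wgauge Φ₁ t w ε g < ENNReal.ofReal 1 :=
    calc wgauge Φ₁ t w ε g ≤ ENNReal.ofReal C * ENNReal.ofReal (2 * C)⁻¹ :=
          (h ε hε).trans (by gcongr)
      _ = ENNReal.ofReal 2⁻¹ := by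
          rw [← ENNReal.ofReal_mul hC.le]
          congr 1
          field_simp
      _ < ENNReal.ofReal 1 := by
          rw [ENNReal.ofReal_lt_ofReal_iff one_pos]
          norm_num
  obtain ⟨l, hl, hl1, hint⟩ := exists_lt_of_wgauge_lt_ofReal hε.le hg
  calc modular Φ₁ t w g * ENNReal.ofReal ε
      ≤ modular Φ₁ t w (fun x => l⁻¹ * g x) * ENNReal.ofReal (ε / l) :=
        mul_le_mul' (modular_le_modular_const_mul hΦ₁ ht hw g ((one_le_inv₀ hl).2 hl1.le))
          (ENNReal.ofReal_le_ofReal (le_div_self hε.le hl hl1.le))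
    _ ≤ 1 := by rwa [mul_comm]

end ModularGauge

theorem isSimple_const_mul {f : ℝ → ℝ} (hf : IsSimple f) (c : ℝ) :
    IsSimple (fun y => c * f y) := by
  refine ⟨hf.1.const_mul c, (hf.2.image (c * ·)).subset ?_⟩
  rintro _ ⟨y, rfl⟩
  exact ⟨f y, ⟨y, rfl⟩, rfl⟩

theorem stmt4_general (t u v w : ℝ → ℝ)
    (hpos : ∀ x > (0:ℝ), 0 < t x ∧ 0 < u x ∧ 0 < v x ∧ 0 < w x)
    (Φ₁ Φ₂ : ℝ → ℝ)
    (hΦ₁mono : MonotoneOn Φ₁ (Ioi 0))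
    (T : (ℝ → ℝ) → (ℝ → ℝ))
    (hhom : ∀ (c : ℝ) (f : ℝ → ℝ) (x : ℝ), |T (fun y => c * f y) x| = |c| * |T f x|) :
    (∃ K > 0, ∀ f, IsSimple f →
        ∫⁻ x in Ioi (0:ℝ), ENNReal.ofReal (Φ₁ (t x * |T f x|) * w x) ≤
          ENNReal.ofReal K *
            ∫⁻ y in Ioi (0:ℝ), ENNReal.ofReal (Φ₂ (K * (u y * |f y|)) * v y)) ↔
    (∃ C > 0, ∀ ε > 0, ∀ f, IsSimple f →
        wgauge Φ₁ t w ε (T f) ≤ ENNReal.ofReal C * wgauge Φ₂ u v ε f) := by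
  constructor
  · rintro ⟨K, hK, hmod⟩
    refine ⟨K, hK, fun ε hε f hf => ?_⟩
    refine wgauge_le_mul_wgauge_of_modular_le (S := IsSimple)
      (fun c _ hg => isSimple_const_mul hg c) hhom hK (fun g hg => ?_) hε.le hf
    rw [modular_const_mul hK.le]
    exact hmod g hg
  · rintro ⟨C, hC, hgauge⟩
    refine ⟨2 * C, by positivity, fun f hf => ?_⟩
    rw [← modular_const_mul (by positivity)]
    exact modular_le_of_wgauge_le hΦ₁mono (fun x hx => (hpos x hx).1.le)
      (fun x hx => (hpos x hx).2.2.2.le) hC fun ε hε => hgauge ε hε f hf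

theorem stmt4 (t u v w : ℝ → ℝ)
    (ht : Measurable t) (hu : Measurable u) (hv : Measurable v) (hw : Measurable w)
    (hpos : ∀ x > (0:ℝ), 0 < t x ∧ 0 < u x ∧ 0 < v x ∧ 0 < w x)
    (Φ₁ Φ₂ : ℝ → ℝ)
    (hΦ₁mono : MonotoneOn Φ₁ (Ioi 0)) (hΦ₁surj : SurjOn Φ₁ (Ioi 0) (Ioi 0))
    (hΦ₂mono : MonotoneOn Φ₂ (Ioi 0)) (hΦ₂surj : SurjOn Φ₂ (Ioi 0) (Ioi 0))
    (T : (ℝ → ℝ) → (ℝ → ℝ))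
    (hhom : ∀ (c : ℝ) (f : ℝ → ℝ) (x : ℝ), |T (fun y => c * f y) x| = |c| * |T f x|) :
    (∃ K > 0, ∀ f, IsSimple f →
        ∫⁻ x in Ioi (0:ℝ), ENNReal.ofReal (Φ₁ (t x * |T f x|) * w x) ≤
          ENNReal.ofReal K *
            ∫⁻ y in Ioi (0:ℝ), ENNReal.ofReal (Φ₂ (K * (u y * |f y|)) * v y)) ↔
    (∃ C > 0, ∀ ε > 0, ∀ f, IsSimple f →
        wgauge Φ₁ t w ε (T f) ≤ ENNReal.ofReal C * wgauge Φ₂ u v ε f) :=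
  stmt4_general t u v w hpos Φ₁ Φ₂ hΦ₁mono T hhom
end

section
/- Let T : S(ℝ₊) → M(ℝ₊) be dilation-commuting (positively homogeneous with (Tf)(λt) = T(f(λ·))(t) for all λ, t > 0), let Φ₁, Φ₂ be nondecreasing surjections of ℝ₊, and fix γ ∈ ℝ, γ ≠ −1. Then the gauge inequality ρ_{Φ₁,t^γ}(Tf) ≤ C ρ_{Φ₂,t^γ}(f) (C independent of simple f) holds if and only if the modular inequality ∫_{ℝ₊} Φ₁(|Tf(t)|) t^γ dt ≤ K ∫_{ℝ₊} Φ₂(K|f(s)|) s^γ ds holds with K independent of simple f. -/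
open scoped ENNReal NNReal
open MeasureTheory Set

/-!
The gauge is the Luxemburg functional of the modular `∫ Φ(|f|) t^γ dt`, so both directions come
from rescaling. Modular ⇒ gauge uses homogeneity only: for every `λ` in the infimum defining the
gauge of `f`, the modular inequality applied to `f / (K λ)` puts `K λ` in the infimum defining
the gauge of `Tf`. Gauge ⇒ modular first holds on the unit ball `∫ Φ₂(K|f|) t^γ ≤ 1`, where the
gauge of `Kf` is at most `1`, hence that of `T(Kf)` is below `K`. The dilation `f ↦ f(r ·)`,
which commutes with `T`, multiplies both modulars by `r^{-(γ+1)}`; as `γ ≠ -1` this factor takes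
every positive value, so every `f` rescales into the unit ball.
-/

/-- The power-weighted gauge `ρ_{Φ,t^γ}(f) = inf{λ>0 : ∫ Φ(|f|/λ)(t^γ/λ) dt ≤ 1}`, `inf ∅ = ∞`. -/
noncomputable def ggauge (Φ : ℝ → ℝ) (γ : ℝ) (f : ℝ → ℝ) : ℝ≥0∞ :=
  sInf ((fun l : ℝ => ENNReal.ofReal l) ''
    {l : ℝ | 0 < l ∧
      ∫⁻ s in Ioi (0:ℝ), ENNReal.ofReal (Φ (|f s| / l) * s ^ γ / l) ≤ 1})

lemma IsSimple.const_mul {f : ℝ → ℝ} (hf : IsSimple f) (c : ℝ) : IsSimple (fun s => c * f s) :=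
  ⟨measurable_const.mul hf.1, (hf.2.image (c * ·)).subset (range_comp (c * ·) f).le⟩

lemma IsSimple.comp_mul_left {f : ℝ → ℝ} (hf : IsSimple f) (r : ℝ) :
    IsSimple (fun s => f (r * s)) :=
  ⟨hf.1.comp (measurable_const_mul r), hf.2.subset (range_comp_subset_range (r * ·) f)⟩

lemma lintegral_Ioi_comp_mul_left (G : ℝ → ℝ≥0∞) {r : ℝ} (hr : 0 < r) :
    ∫⁻ s in Ioi 0, G (r * s) = ENNReal.ofReal r⁻¹ * ∫⁻ s in Ioi 0, G s := by
  have he := measurableEmbedding_mulLeft₀ hr.ne'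
  have hpre : (r * ·) ⁻¹' Ioi (0 : ℝ) = Ioi 0 := by
    rw [preimage_const_mul_Ioi₀ _ hr, zero_div]
  calc ∫⁻ s in Ioi 0, G (r * s)
      = ∫⁻ s, G s ∂(volume.restrict ((r * ·) ⁻¹' Ioi 0)).map (r * ·) := by
        rw [he.lintegral_map, hpre]
    _ = ENNReal.ofReal r⁻¹ * ∫⁻ s in Ioi 0, G s := by
        rw [← he.restrict_map, Real.map_volume_mul_left hr.ne', abs_of_pos (inv_pos.2 hr),
          Measure.restrict_smul, lintegral_smul_measure, smul_eq_mul]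

lemma lintegral_Ioi_comp_mul_left_mul_rpow (F : ℝ → ℝ) (γ : ℝ) {r : ℝ} (hr : 0 < r) :
    ∫⁻ s in Ioi 0, ENNReal.ofReal (F (r * s) * s ^ γ)
      = ENNReal.ofReal (r ^ (-(γ + 1))) * ∫⁻ s in Ioi 0, ENNReal.ofReal (F s * s ^ γ) := by
  have hweight : ∀ s ∈ Ioi (0 : ℝ), ENNReal.ofReal (F (r * s) * s ^ γ)
      = ENNReal.ofReal (r ^ (-γ)) * ENNReal.ofReal (F (r * s) * (r * s) ^ γ) := by
    intro s hs
    rw [← ENNReal.ofReal_mul (by positivity), Real.mul_rpow hr.le (le_of_lt hs),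
      Real.rpow_neg hr.le]
    field_simp
  rw [setLIntegral_congr_fun measurableSet_Ioi hweight,
    lintegral_const_mul' _ _ ENNReal.ofReal_ne_top,
    lintegral_Ioi_comp_mul_left (fun u => ENNReal.ofReal (F u * u ^ γ)) hr, ← mul_assoc,
    ← ENNReal.ofReal_mul (by positivity), ← Real.rpow_neg_one r, ← Real.rpow_add hr, neg_add]

noncomputable def weightedModular (Φ : ℝ → ℝ) (γ : ℝ) (f : ℝ → ℝ) : ℝ≥0∞ :=
  ∫⁻ s in Ioi 0, ENNReal.ofReal (Φ |f s| * s ^ γ)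

section weightedModular

variable {Φ : ℝ → ℝ} {γ : ℝ} {f g : ℝ → ℝ}

lemma weightedModular_congr (h : ∀ s > 0, |f s| = |g s|) :
    weightedModular Φ γ f = weightedModular Φ γ g :=
  setLIntegral_congr_fun measurableSet_Ioi fun s hs => by rw [h s hs]

lemma weightedModular_const_mul {c : ℝ} (hc : 0 ≤ c) :
    weightedModular Φ γ (fun s => c * f s) =
      ∫⁻ s in Ioi 0, ENNReal.ofReal (Φ (c * |f s|) * s ^ γ) := by
  simp only [weightedModular, abs_mul, abs_of_nonneg hc]

lemma weightedModular_comp_mul_left {r : ℝ} (hr : 0 < r) :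
    weightedModular Φ γ (fun s => f (r * s)) =
      ENNReal.ofReal (r ^ (-(γ + 1))) * weightedModular Φ γ f :=
  lintegral_Ioi_comp_mul_left_mul_rpow (fun u => Φ |f u|) γ hr

lemma weightedModular_const_mul_mono (hΦ : MonotoneOn Φ (Ioi 0)) {a b : ℝ} (ha : 0 < a)
    (hab : a ≤ b) :
    weightedModular Φ γ (fun s => a * f s) ≤ weightedModular Φ γ (fun s => b * f s) := by
  refine setLIntegral_mono' measurableSet_Ioi fun s hs => ?_
  gcongr ENNReal.ofReal (?_ * _)
  · exact Real.rpow_nonneg (le_of_lt hs) γ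
  rcases eq_or_ne (f s) 0 with h | h
  · simp [h]
  · have hf : 0 < |f s| := abs_pos.2 h
    rw [abs_mul, abs_mul, abs_of_pos ha, abs_of_pos (ha.trans_le hab)]
    exact hΦ (mul_pos ha hf) (mul_pos (ha.trans_le hab) hf) (by gcongr)

end weightedModular

lemma ENNReal.le_mul_of_forall_le_ofReal {a b c : ℝ≥0∞} (hc0 : c ≠ 0) (hc : c ≠ ⊤)
    (h : ∀ ρ : ℝ, 0 < ρ → b ≤ ENNReal.ofReal ρ → a ≤ c * ENNReal.ofReal ρ) : a ≤ c * b := by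
  rw [mul_comm, ← ENNReal.div_le_iff hc0 hc]
  refine le_of_forall_gt_imp_ge_of_dense fun x hbx => ?_
  rcases eq_or_ne x ⊤ with rfl | hx
  · exact le_top
  have hρ : 0 < x.toReal := ENNReal.toReal_pos (pos_of_gt hbx).ne' hx
  have := h x.toReal hρ (by rw [ENNReal.ofReal_toReal hx]; exact hbx.le)
  rw [ENNReal.ofReal_toReal hx] at this
  exact ENNReal.div_le_of_le_mul' this

section ggauge

variable {Φ : ℝ → ℝ} {γ : ℝ} {f : ℝ → ℝ}

lemma lintegral_div_le_one_iff_weightedModular_le {l : ℝ} (hl : 0 < l) :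
    (∫⁻ s in Ioi 0, ENNReal.ofReal (Φ (|f s| / l) * s ^ γ / l) ≤ 1) ↔
      weightedModular Φ γ (fun s => l⁻¹ * f s) ≤ ENNReal.ofReal l := by
  have hintegrand : ∀ s, ENNReal.ofReal (Φ (|f s| / l) * s ^ γ / l)
      = ENNReal.ofReal (Φ |l⁻¹ * f s| * s ^ γ) * (ENNReal.ofReal l)⁻¹ := by
    intro s
    rw [div_eq_mul_inv _ l, ENNReal.ofReal_mul' (inv_nonneg.2 hl.le),
      ENNReal.ofReal_inv_of_pos hl, abs_mul, abs_of_pos (inv_pos.2 hl), inv_mul_eq_div]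
  simp_rw [hintegrand]
  rw [lintegral_mul_const' _ _ (ENNReal.inv_ne_top.2 (ENNReal.ofReal_pos.2 hl).ne'),
    ← div_eq_mul_inv, ENNReal.div_le_iff (ENNReal.ofReal_pos.2 hl).ne' ENNReal.ofReal_ne_top,
    one_mul, weightedModular]

lemma ggauge_le_ofReal {l : ℝ} (hl : 0 < l)
    (h : weightedModular Φ γ (fun s => l⁻¹ * f s) ≤ ENNReal.ofReal l) :
    ggauge Φ γ f ≤ ENNReal.ofReal l :=
  sInf_le ⟨l, ⟨hl, (lintegral_div_le_one_iff_weightedModular_le hl).2 h⟩, rfl⟩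

lemma le_ofReal_mul_ggauge {a : ℝ≥0∞} {c : ℝ} (hc : 0 < c)
    (h : ∀ l > 0, weightedModular Φ γ (fun s => l⁻¹ * f s) ≤ ENNReal.ofReal l →
      a ≤ ENNReal.ofReal (c * l)) :
    a ≤ ENNReal.ofReal c * ggauge Φ γ f := by
  have hc0 : ENNReal.ofReal c ≠ 0 := (ENNReal.ofReal_pos.2 hc).ne'
  rw [mul_comm, ← ENNReal.div_le_iff hc0 ENNReal.ofReal_ne_top]
  refine le_sInf ?_
  rintro _ ⟨l, ⟨hl, hadm⟩, rfl⟩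
  rw [ENNReal.div_le_iff hc0 ENNReal.ofReal_ne_top, ← ENNReal.ofReal_mul hl.le, mul_comm]
  exact h l hl ((lintegral_div_le_one_iff_weightedModular_le hl).1 hadm)

lemma weightedModular_le_of_ggauge_lt (hΦ : MonotoneOn Φ (Ioi 0)) {K : ℝ} (hK : 0 < K)
    (h : ggauge Φ γ f < ENNReal.ofReal K) :
    weightedModular Φ γ (fun s => K⁻¹ * f s) ≤ ENNReal.ofReal K := by
  obtain ⟨_, ⟨l, ⟨hl, hadm⟩, rfl⟩, hlK⟩ := sInf_lt_iff.1 h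
  have hlK : l ≤ K := ((ENNReal.ofReal_lt_ofReal_iff hK).1 hlK).le
  calc weightedModular Φ γ (fun s => K⁻¹ * f s)
      ≤ weightedModular Φ γ (fun s => l⁻¹ * f s) :=
        weightedModular_const_mul_mono hΦ (inv_pos.2 hK) (inv_anti₀ hl hlK)
    _ ≤ ENNReal.ofReal l := (lintegral_div_le_one_iff_weightedModular_le hl).1 hadm
    _ ≤ ENNReal.ofReal K := ENNReal.ofReal_le_ofReal hlK

end ggauge

section DilationCommuting

variable {Φ₁ Φ₂ : ℝ → ℝ} {γ : ℝ} {T : (ℝ → ℝ) → (ℝ → ℝ)}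

lemma weightedModular_le_of_ggauge_bound
    (hhom : ∀ (c : ℝ) (f : ℝ → ℝ) (x : ℝ), |T (fun y => c * f y) x| = |c| * |T f x|)
    (hΦ₁ : MonotoneOn Φ₁ (Ioi 0)) {C K : ℝ} (hK : 0 < K) (hCK : C < K)
    (hG : ∀ f, IsSimple f → ggauge Φ₁ γ (T f) ≤ ENNReal.ofReal C * ggauge Φ₂ γ f)
    {g : ℝ → ℝ} (hg : IsSimple g) (hunit : weightedModular Φ₂ γ (fun s => K * g s) ≤ 1) :
    weightedModular Φ₁ γ (T g) ≤ ENNReal.ofReal K := by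
  have hgauge : ggauge Φ₂ γ (fun s => K * g s) ≤ 1 := by
    simpa using ggauge_le_ofReal (f := fun s => K * g s) one_pos (by simpa using hunit)
  have hTgauge : ggauge Φ₁ γ (T fun s => K * g s) < ENNReal.ofReal K :=
    calc ggauge Φ₁ γ (T fun s => K * g s)
        ≤ ENNReal.ofReal C * ggauge Φ₂ γ (fun s => K * g s) := hG _ (hg.const_mul K)
      _ ≤ ENNReal.ofReal C := mul_le_of_le_one_right' hgauge
      _ < ENNReal.ofReal K := (ENNReal.ofReal_lt_ofReal_iff hK).2 hCK
  calc weightedModular Φ₁ γ (T g)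
      = weightedModular Φ₁ γ (fun s => K⁻¹ * T (fun s => K * g s) s) :=
        weightedModular_congr fun s _ => by
          rw [abs_mul, hhom, abs_of_pos hK, abs_of_pos (inv_pos.2 hK),
            inv_mul_cancel_left₀ hK.ne']
    _ ≤ ENNReal.ofReal K := weightedModular_le_of_ggauge_lt hΦ₁ hK hTgauge

lemma weightedModular_le_mul_of_le_one_imp (hγ : γ ≠ -1)
    (hdil : ∀ (f : ℝ → ℝ) (lam : ℝ), 0 < lam → ∀ x > (0:ℝ),
      T f (lam * x) = T (fun s => f (lam * s)) x)
    {K : ℝ} (hK : 0 < K)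
    (hunit : ∀ g, IsSimple g → weightedModular Φ₂ γ (fun s => K * g s) ≤ 1 →
      weightedModular Φ₁ γ (T g) ≤ ENNReal.ofReal K)
    {f : ℝ → ℝ} (hf : IsSimple f) :
    weightedModular Φ₁ γ (T f) ≤ ENNReal.ofReal K * weightedModular Φ₂ γ (fun s => K * f s) := by
  refine ENNReal.le_mul_of_forall_le_ofReal (ENNReal.ofReal_pos.2 hK).ne' ENNReal.ofReal_ne_top
    fun ρ hρ hA => ?_
  set r := ρ ^ (γ + 1)⁻¹
  have hr : 0 < r := Real.rpow_pos_of_pos hρ _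
  have hγ1 : γ + 1 ≠ 0 := fun h => hγ (eq_neg_of_add_eq_zero_left h)
  have hrpow : ENNReal.ofReal (r ^ (-(γ + 1))) = (ENNReal.ofReal ρ)⁻¹ := by
    rw [← Real.rpow_mul hρ.le, inv_mul_eq_div, neg_div, div_self hγ1, Real.rpow_neg_one,
      ENNReal.ofReal_inv_of_pos hρ]
  have hρ0 : ENNReal.ofReal ρ ≠ 0 := (ENNReal.ofReal_pos.2 hρ).ne'
  have hdilated : weightedModular Φ₂ γ (fun s => K * f (r * s)) ≤ 1 := by
    rw [weightedModular_comp_mul_left (f := fun s => K * f s) hr, hrpow,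
      ENNReal.inv_mul_le_iff hρ0 ENNReal.ofReal_ne_top, mul_one]
    exact hA
  have hT := hunit _ (hf.comp_mul_left r) hdilated
  rw [weightedModular_congr (g := fun s => T f (r * s)) fun s hs => by rw [hdil f r hr s hs],
    weightedModular_comp_mul_left hr, hrpow, ENNReal.inv_mul_le_iff hρ0 ENNReal.ofReal_ne_top]
    at hT
  rwa [mul_comm]

lemma ggauge_le_mul_of_weightedModular_le
    (hhom : ∀ (c : ℝ) (f : ℝ → ℝ) (x : ℝ), |T (fun y => c * f y) x| = |c| * |T f x|)
    {K : ℝ} (hK : 0 < K)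
    (hM : ∀ g, IsSimple g →
      weightedModular Φ₁ γ (T g) ≤ ENNReal.ofReal K * weightedModular Φ₂ γ (fun s => K * g s))
    {f : ℝ → ℝ} (hf : IsSimple f) :
    ggauge Φ₁ γ (T f) ≤ ENNReal.ofReal K * ggauge Φ₂ γ f := by
  refine le_ofReal_mul_ggauge hK fun l hl hadm => ggauge_le_ofReal (mul_pos hK hl) ?_
  calc weightedModular Φ₁ γ (fun s => (K * l)⁻¹ * T f s)
      = weightedModular Φ₁ γ (T fun s => (K * l)⁻¹ * f s) :=
        weightedModular_congr fun s _ => by rw [hhom, abs_mul]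
    _ ≤ ENNReal.ofReal K * weightedModular Φ₂ γ (fun s => K * ((K * l)⁻¹ * f s)) :=
        hM _ (hf.const_mul _)
    _ = ENNReal.ofReal K * weightedModular Φ₂ γ (fun s => l⁻¹ * f s) := by
        simp only [mul_inv, mul_assoc, mul_inv_cancel_left₀ hK.ne']
    _ ≤ ENNReal.ofReal K * ENNReal.ofReal l := by gcongr
    _ = ENNReal.ofReal (K * l) := (ENNReal.ofReal_mul hK.le).symm

end DilationCommuting

theorem stmt5_general (γ : ℝ) (hγ : γ ≠ -1)
    (Φ₁ Φ₂ : ℝ → ℝ)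
    (hΦ₁mono : MonotoneOn Φ₁ (Ioi 0))
    (T : (ℝ → ℝ) → (ℝ → ℝ))
    (hhom : ∀ (c : ℝ) (f : ℝ → ℝ) (x : ℝ), |T (fun y => c * f y) x| = |c| * |T f x|)
    (hdil : ∀ (f : ℝ → ℝ) (lam : ℝ), 0 < lam → ∀ x > (0:ℝ),
      T f (lam * x) = T (fun s => f (lam * s)) x) :
    (∃ C > 0, ∀ f, IsSimple f →
        ggauge Φ₁ γ (T f) ≤ ENNReal.ofReal C * ggauge Φ₂ γ f) ↔
    (∃ K > 0, ∀ f, IsSimple f →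
        ∫⁻ s in Ioi (0:ℝ), ENNReal.ofReal (Φ₁ |T f s| * s ^ γ) ≤
          ENNReal.ofReal K *
            ∫⁻ s in Ioi (0:ℝ), ENNReal.ofReal (Φ₂ (K * |f s|) * s ^ γ)) := by
  constructor
  · rintro ⟨C, hC, hG⟩
    have hK : 0 < C + 1 := by linarith
    refine ⟨C + 1, hK, fun f hf => ?_⟩
    rw [← weightedModular_const_mul hK.le]
    exact weightedModular_le_mul_of_le_one_imp hγ hdil hK
      (fun g hg => weightedModular_le_of_ggauge_bound hhom hΦ₁mono hK (lt_add_one C) hG hg) hf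
  · rintro ⟨K, hK, hM⟩
    refine ⟨K, hK, fun f hf => ggauge_le_mul_of_weightedModular_le hhom hK (fun g hg => ?_) hf⟩
    rw [weightedModular_const_mul hK.le]
    exact hM g hg

theorem stmt5 (γ : ℝ) (hγ : γ ≠ -1)
    (Φ₁ Φ₂ : ℝ → ℝ)
    (hΦ₁mono : MonotoneOn Φ₁ (Ioi 0)) (hΦ₁surj : SurjOn Φ₁ (Ioi 0) (Ioi 0))
    (hΦ₂mono : MonotoneOn Φ₂ (Ioi 0)) (hΦ₂surj : SurjOn Φ₂ (Ioi 0) (Ioi 0))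
    (T : (ℝ → ℝ) → (ℝ → ℝ))
    (hhom : ∀ (c : ℝ) (f : ℝ → ℝ) (x : ℝ), |T (fun y => c * f y) x| = |c| * |T f x|)
    (hdil : ∀ (f : ℝ → ℝ) (lam : ℝ), 0 < lam → ∀ x > (0:ℝ),
      T f (lam * x) = T (fun s => f (lam * s)) x) :
    (∃ C > 0, ∀ f, IsSimple f →
        ggauge Φ₁ γ (T f) ≤ ENNReal.ofReal C * ggauge Φ₂ γ f) ↔
    (∃ K > 0, ∀ f, IsSimple f →
        ∫⁻ s in Ioi (0:ℝ), ENNReal.ofReal (Φ₁ |T f s| * s ^ γ) ≤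
          ENNReal.ofReal K *
            ∫⁻ s in Ioi (0:ℝ), ENNReal.ofReal (Φ₂ (K * |f s|) * s ^ γ)) :=
  stmt5_general γ hγ Φ₁ Φ₂ hΦ₁mono T hhom hdil
end

section
/- Let t, u, v, w be weights on ℝ₊, Φ₁ nonnegative nondecreasing, and Φ₂ a Young function with complementary function Ψ₂. Then the weak-type modular inequality ∫_{{If > λ}} Φ₁(λ w(x)) t(x) dx ≤ ∫ Φ₂(K u(y) f(y)) v(y) dy (all f ≥ 0, all λ > 0) holds if and only if there is C > 0 such that for all λ, x > 0: ∫_0^x Ψ₂( α(λ,x) / (C λ u(y) v(y)) ) v(y) dy ≤ α(λ,x) := ∫_x^∞ Φ₁(λ w(y)) t(y) dy < ∞. -/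
open scoped ENNReal NNReal
open MeasureTheory Set

/-- Generalized (right-continuous) inverse of `φ`: `φ⁻¹(s) = inf{x ≥ 0 : s ≤ φ(x)}`. -/
noncomputable def geninv (φ : ℝ → ℝ) (s : ℝ) : ℝ := sInf {x : ℝ | 0 ≤ x ∧ s ≤ φ x}

/-- The Young function `Φ(t) = ∫_0^t φ(s) ds`. -/
noncomputable def young (φ : ℝ → ℝ) (t : ℝ) : ℝ := ∫ s in (0:ℝ)..t, φ s

/-- The complementary Young function `Ψ(t) = ∫_0^t φ⁻¹(s) ds`. -/
noncomputable def coYoung (φ : ℝ → ℝ) (t : ℝ) : ℝ := ∫ s in (0:ℝ)..t, geninv φ s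

/-!
Necessity: testing the weak-type inequality with a multiple of the indicator of a set in `(0, x)`
on which `u` and `v` are bounded shows `α(λ, x) < ∞`; testing it with rescaled truncations of
`φ₂⁻¹(s) / (Ku)`, `s = α / (3Kλuv)`, gives the condition with `C = 3K`.

Sufficiency: if `λ < ∫_0^x f`, then `2α ≤ (2α/λ) ∫_0^x f`, and Young's inequality applied pointwise
with `a = α / (Cλuv)`, `b = 2Cuf` bounds this by `∫_0^x Ψ₂(a) v + ∫ Φ₂(2Cuf) v ≤ α + ∫ Φ₂(2Cuf) v`,
so `α(λ, x) ≤ ∫ Φ₂(2Cuf) v`.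
The integral over the level set `{If > λ}` is at most the supremum of the tails `α(λ, x)` over its
points.
-/

open Filter

section Young

variable {φ : ℝ → ℝ}

lemma geninv_nonneg (φ : ℝ → ℝ) (s : ℝ) : 0 ≤ geninv φ s :=
  Real.sInf_nonneg fun _ hx => hx.1

lemma geninv_le {s ρ : ℝ} (hρ : 0 ≤ ρ) (h : s ≤ φ ρ) : geninv φ s ≤ ρ :=
  csInf_le ⟨0, fun _ hx => hx.1⟩ ⟨hρ, h⟩

lemma lt_of_lt_geninv {s ρ : ℝ} (hρ : 0 ≤ ρ) (h : ρ < geninv φ s) : φ ρ < s :=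
  lt_of_not_ge fun hs => (geninv_le hρ hs).not_gt h

lemma nonempty_geninv_set (htop : Tendsto φ atTop atTop) (s : ℝ) :
    {x : ℝ | 0 ≤ x ∧ s ≤ φ x}.Nonempty :=
  ((eventually_ge_atTop 0).and (htop.eventually_ge_atTop s)).exists

lemma geninv_mono (htop : Tendsto φ atTop atTop) : Monotone (geninv φ) := fun _ s₂ h =>
  csInf_le_csInf ⟨0, fun _ hx => hx.1⟩ (nonempty_geninv_set htop s₂)
    fun _ hx => ⟨hx.1, h.trans hx.2⟩

lemma le_or_le_geninv (hmono : Monotone φ) (htop : Tendsto φ atTop atTop) (σ ρ : ℝ) :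
    σ ≤ φ ρ ∨ ρ ≤ geninv φ σ := by
  by_contra! h
  obtain ⟨x, ⟨-, hσx⟩, hxρ⟩ := exists_lt_of_csInf_lt (nonempty_geninv_set htop σ) h.2
  exact h.1.not_ge (hσx.trans (hmono hxρ.le))

lemma young_zero (φ : ℝ → ℝ) : young φ 0 = 0 := intervalIntegral.integral_same

lemma coYoung_zero (φ : ℝ → ℝ) : coYoung φ 0 = 0 := intervalIntegral.integral_same

lemma young_nonneg (hnn : ∀ x, 0 ≤ φ x) {b : ℝ} (hb : 0 ≤ b) : 0 ≤ young φ b :=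
  intervalIntegral.integral_nonneg hb fun x _ => hnn x

lemma coYoung_nonneg (φ : ℝ → ℝ) {b : ℝ} (hb : 0 ≤ b) : 0 ≤ coYoung φ b :=
  young_nonneg (geninv_nonneg φ) hb

lemma young_mono (hmono : Monotone φ) (hnn : ∀ x, 0 ≤ φ x) : Monotone (young φ) := by
  intro a b h
  have hsplit := intervalIntegral.integral_add_adjacent_intervals
    (hmono.intervalIntegrable (μ := volume) (a := 0) (b := a))
    (hmono.intervalIntegrable (μ := volume) (a := a) (b := b))
  have hab : 0 ≤ ∫ s in a..b, φ s := intervalIntegral.integral_nonneg h fun x _ => hnn x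
  unfold young
  linarith

lemma ofReal_young (hmono : Monotone φ) (hnn : ∀ x, 0 ≤ φ x) {b : ℝ} (hb : 0 ≤ b) :
    ENNReal.ofReal (young φ b) = ∫⁻ ρ in Ioo 0 b, ENNReal.ofReal (φ ρ) := by
  rw [young, intervalIntegral.integral_of_le hb, ofReal_integral_eq_lintegral_ofReal
    ((intervalIntegrable_iff_integrableOn_Ioc_of_le hb).mp (hmono.intervalIntegrable (μ := volume)))
    (Eventually.of_forall hnn), setLIntegral_congr Ioo_ae_eq_Ioc]

lemma young_le_mul_self (hmono : Monotone φ) {s : ℝ} (hs : 0 ≤ s) : young φ s ≤ s * φ s := by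
  have := intervalIntegral.integral_mono_on hs (hmono.intervalIntegrable (μ := volume))
    intervalIntegrable_const fun x hx => hmono hx.2
  simpa [young] using this

lemma young_le_mul_of_le_geninv (hmono : Monotone φ) {s b : ℝ} (hb : 0 ≤ b)
    (h : b ≤ geninv φ s) : young φ b ≤ s * b := by
  have := intervalIntegral.integral_mono_on_of_le_Ioo hb (hmono.intervalIntegrable (μ := volume))
    intervalIntegrable_const fun ρ hρ => (lt_of_lt_geninv hρ.1.le (hρ.2.trans_le h)).le
  simpa [young, mul_comm] using this

lemma coYoung_mul_le (htop : Tendsto φ atTop atTop) {a c K lam u v : ℝ} (ha : 0 ≤ a)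
    (hc : 0 < c) (hK : 0 < K) (hlam : 0 < lam) (hu : 0 < u) (hv : 0 < v) :
    coYoung φ (a / (c * K * lam * u * v)) * v ≤
      a / (c * lam) * (geninv φ (a / (c * K * lam * u * v)) / (K * u)) := calc
  _ ≤ a / (c * K * lam * u * v) * geninv φ (a / (c * K * lam * u * v)) * v :=
      mul_le_mul_of_nonneg_right (young_le_mul_self (geninv_mono htop) (by positivity)) hv.le
  _ = _ := by field_simp

lemma young_mul_le (hmono : Monotone φ) {a c K lam u v g : ℝ} (hc : 0 < c) (hK : 0 < K)
    (hlam : 0 < lam) (hu : 0 < u) (hv : 0 < v) (hg : 0 ≤ g)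
    (hgle : g ≤ geninv φ (a / (c * K * lam * u * v)) / (K * u)) :
    young φ (K * u * g) * v ≤ a / (c * lam) * g := by
  have hb : K * u * g ≤ geninv φ (a / (c * K * lam * u * v)) := by
    rwa [le_div_iff₀ (by positivity), mul_comm] at hgle
  calc _ ≤ a / (c * K * lam * u * v) * (K * u * g) * v :=
        mul_le_mul_of_nonneg_right (young_le_mul_of_le_geninv hmono (by positivity) hb) hv.le
    _ = _ := by field_simp

lemma volume_Ioo_prod_Ioo_inter_le {g : ℝ → ℝ} (hg : Measurable g) (a b : ℝ) :
    volume (Ioo 0 a ×ˢ Ioo 0 b ∩ {p : ℝ × ℝ | p.2 ≤ g p.1}) ≤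
      ∫⁻ x in Ioo 0 a, ENNReal.ofReal (g x) := by
  have hmeas : MeasurableSet {p : ℝ × ℝ | p.2 ≤ g p.1} :=
    measurableSet_le measurable_snd (hg.comp measurable_fst)
  rw [Measure.volume_eq_prod, Measure.prod_apply ((measurableSet_Ioo.prod measurableSet_Ioo).inter
    hmeas), ← lintegral_indicator measurableSet_Ioo]
  refine lintegral_mono fun x => ?_
  by_cases hx : x ∈ Ioo 0 a
  · rw [indicator_of_mem hx, ← sub_zero (g x), ← Real.volume_Ioc]
    exact measure_mono fun y hy => ⟨hy.1.2.1, hy.2⟩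
  · exact (measure_mono_null (t := ∅) (fun y hy => hx hy.1.1) measure_empty).le.trans zero_le

/-- The rectangle `(0, a) × (0, b)` is covered by the regions under the graphs of `φ⁻¹` on
`(0, a)` and of `φ` on `(0, b)`. -/
theorem mul_le_coYoung_add_young (hmono : Monotone φ) (hnn : ∀ x, 0 ≤ φ x)
    (htop : Tendsto φ atTop atTop) {a b : ℝ} (ha : 0 ≤ a) (hb : 0 ≤ b) :
    a * b ≤ coYoung φ a + young φ b := by
  set R := Ioo (0 : ℝ) a ×ˢ Ioo (0 : ℝ) b
  have hcover : R ⊆ (R ∩ {p | p.2 ≤ geninv φ p.1}) ∪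
      Prod.swap ⁻¹' (Ioo 0 b ×ˢ Ioo 0 a ∩ {p | p.2 ≤ φ p.1}) := by
    rintro ⟨σ, ρ⟩ hp
    rcases le_or_le_geninv hmono htop σ ρ with h | h
    · exact Or.inr ⟨⟨hp.2, hp.1⟩, h⟩
    · exact Or.inl ⟨hp, h⟩
  have hswap : MeasurePreserving Prod.swap (volume : Measure (ℝ × ℝ)) volume :=
    Measure.measurePreserving_swap
  have hmeas : MeasurableSet {p : ℝ × ℝ | p.2 ≤ φ p.1} :=
    measurableSet_le measurable_snd (hmono.measurable.comp measurable_fst)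
  have key : ENNReal.ofReal a * ENNReal.ofReal b ≤
      ENNReal.ofReal (coYoung φ a) + ENNReal.ofReal (young φ b) := calc
    _ = volume R := by
      rw [Measure.volume_eq_prod, Measure.prod_prod, Real.volume_Ioo, Real.volume_Ioo, sub_zero,
        sub_zero]
    _ ≤ volume (R ∩ {p | p.2 ≤ geninv φ p.1}) +
        volume (Prod.swap ⁻¹' (Ioo 0 b ×ˢ Ioo 0 a ∩ {p : ℝ × ℝ | p.2 ≤ φ p.1})) :=
      (measure_mono hcover).trans (measure_union_le _ _)
    _ ≤ _ := by
      rw [hswap.measure_preimage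
        ((measurableSet_Ioo.prod measurableSet_Ioo).inter hmeas).nullMeasurableSet,
        coYoung, ← young, ofReal_young (geninv_mono htop) (geninv_nonneg φ) ha,
        ofReal_young hmono hnn hb]
      exact add_le_add (volume_Ioo_prod_Ioo_inter_le (geninv_mono htop).measurable a b)
        (volume_Ioo_prod_Ioo_inter_le hmono.measurable b a)
  rwa [← ENNReal.ofReal_mul ha, ← ENNReal.ofReal_add (coYoung_nonneg φ ha) (young_nonneg hnn hb),
    ENNReal.ofReal_le_ofReal_iff (add_nonneg (coYoung_nonneg φ ha) (young_nonneg hnn hb))] at key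

lemma mul_le_coYoung_mul_add_young_mul (hmono : Monotone φ) (hnn : ∀ x, 0 ≤ φ x)
    (htop : Tendsto φ atTop atTop) {a C lam u v f : ℝ} (ha : 0 ≤ a) (hC : 0 < C) (hlam : 0 < lam)
    (hu : 0 < u) (hv : 0 < v) (hf : 0 ≤ f) :
    2 * a / lam * f ≤ coYoung φ (a / (C * lam * u * v)) * v + young φ (2 * C * u * f) * v := calc
  2 * a / lam * f = a / (C * lam * u * v) * (2 * C * u * f) * v := by field_simp
  _ ≤ _ := by
    rw [← add_mul]
    exact mul_le_mul_of_nonneg_right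
      (mul_le_coYoung_add_young hmono hnn htop (by positivity) (by positivity)) hv.le

end Young

section LevelSets

lemma setLIntegral_Ioi_le_of_lt_setLIntegral_Ioo (g : ℝ → ℝ≥0∞) {f : ℝ → ℝ} {c : ℝ≥0∞} {x : ℝ}
    (hx : 0 < x) (hc : c < ∫⁻ y in Ioo 0 x, ENNReal.ofReal (f y)) :
    ∫⁻ z in Ioi x, g z ≤
      ∫⁻ z in {z : ℝ | z ∈ Ioi 0 ∧ c < ∫⁻ y in Ioo 0 z, ENNReal.ofReal (f y)}, g z :=
  lintegral_mono_set fun _ hz =>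
    ⟨hx.trans hz, hc.trans_le (lintegral_mono_set (Ioo_subset_Ioo_right (le_of_lt hz)))⟩

lemma setLIntegral_le_of_forall_setLIntegral_Ioi_le {P : Set ℝ} (hbdd : BddBelow P)
    {g : ℝ → ℝ≥0∞} {R : ℝ≥0∞} (h : ∀ x ∈ P, ∫⁻ z in Ioi x, g z ≤ R) : ∫⁻ z in P, g z ≤ R := by
  rcases P.eq_empty_or_nonempty with rfl | hne
  · simp
  obtain ⟨x, hanti, hlim, hxP⟩ := exists_seq_tendsto_sInf hne hbdd
  calc ∫⁻ z in P, g z ≤ ∫⁻ z in Ici (sInf P), g z := lintegral_mono_set fun z hz => csInf_le hbdd hz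
    _ = ∫⁻ z in Ioi (sInf P), g z := by rw [Measure.restrict_congr_set Ioi_ae_eq_Ici]
    _ ≤ ∫⁻ z in ⋃ n, Ioi (x n), g z :=
        lintegral_mono_set fun z hz => mem_iUnion.2 (hlim.eventually (gt_mem_nhds hz)).exists
    _ = ⨆ n, ∫⁻ z in Ioi (x n), g z := setLIntegral_iUnion_of_directed _
        (Monotone.directed_le fun _ _ hmn => Ioi_subset_Ioi (hanti hmn))
    _ ≤ R := iSup_le fun n => h _ (hxP n)

lemma exists_lt_setLIntegral_min_natCast {α : Type*} [MeasurableSpace α] {μ : Measure α}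
    {f : α → ℝ} (hf : Measurable f) {s : Set α} {c : ℝ≥0∞}
    (hc : c < ∫⁻ y in s, ENNReal.ofReal (f y) ∂μ) :
    ∃ N : ℕ, c < ∫⁻ y in s, ENNReal.ofReal (min (f y) N) ∂μ := by
  have hsup : ∫⁻ y in s, ENNReal.ofReal (f y) ∂μ =
      ⨆ N : ℕ, ∫⁻ y in s, ENNReal.ofReal (min (f y) N) ∂μ := by
    rw [← lintegral_iSup (fun N => (hf.min measurable_const).ennreal_ofReal)
      fun m n hmn y => ENNReal.ofReal_le_ofReal (min_le_min_left _ (Nat.cast_le.2 hmn))]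
    refine lintegral_congr fun y => le_antisymm ?_ ?_
    · obtain ⟨N, hN⟩ := exists_nat_ge (f y)
      exact le_iSup_of_le N (by rw [min_eq_left hN])
    · exact iSup_le fun N => ENNReal.ofReal_le_ofReal (min_le_left _ _)
  exact lt_iSup_iff.1 (hsup ▸ hc)

lemma exists_measure_inter_setOf_le_natCast_pos {α : Type*} [MeasurableSpace α]
    {μ : Measure α} {s : Set α} (hs : μ s ≠ 0) (u v : α → ℝ) :
    ∃ M : ℕ, 0 < μ (s ∩ {y | u y ≤ M ∧ v y ≤ M}) := by
  refine exists_measure_pos_of_not_measure_iUnion_null ?_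
  have hunion : ⋃ M : ℕ, s ∩ {y | u y ≤ M ∧ v y ≤ M} = s := by
    refine (iUnion_subset fun M => inter_subset_left).antisymm fun y hy => mem_iUnion.2 ?_
    obtain ⟨M, hM⟩ := exists_nat_ge (max (u y) (v y))
    exact ⟨M, hy, (le_max_left _ _).trans hM, (le_max_right _ _).trans hM⟩
  rwa [hunion]

lemma exists_le_setLIntegral_eq {f : ℝ → ℝ} (hf : Measurable f) (hf₀ : ∀ y, 0 ≤ f y)
    {s : Set ℝ} (hs : volume s ≠ ⊤) {c : ℝ} (hc : 0 ≤ c)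
    (hlt : ENNReal.ofReal c < ∫⁻ y in s, ENNReal.ofReal (f y)) :
    ∃ h : ℝ → ℝ, Measurable h ∧ (∀ y, 0 ≤ h y ∧ h y ≤ f y) ∧
      ∫⁻ y in s, ENNReal.ofReal (h y) = ENNReal.ofReal c := by
  obtain ⟨N, hN⟩ := exists_lt_setLIntegral_min_natCast hf hlt
  set m := ∫⁻ y in s, ENNReal.ofReal (min (f y) N)
  have hm : m ≠ ⊤ := by
    refine ne_top_of_le_ne_top (ENNReal.mul_ne_top (ENNReal.ofReal_ne_top (r := N)) hs) ?_
    rw [← setLIntegral_const]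
    exact lintegral_mono fun y => ENNReal.ofReal_le_ofReal (min_le_right _ _)
  have hm₀ : 0 < m.toReal := ENNReal.toReal_pos (hN.trans_le' zero_le).ne' hm
  have hcm : c / m.toReal ≤ 1 := by
    rw [div_le_one hm₀, ← ENNReal.ofReal_le_iff_le_toReal hm]
    exact hN.le
  refine ⟨fun y => c / m.toReal * min (f y) N, measurable_const.mul (hf.min measurable_const),
    fun y => ⟨mul_nonneg (div_nonneg hc hm₀.le) (le_min (hf₀ y) N.cast_nonneg),
      (mul_le_of_le_one_left (le_min (hf₀ y) N.cast_nonneg) hcm).trans (min_le_left _ _)⟩, ?_⟩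
  simp_rw [ENNReal.ofReal_mul (div_nonneg hc hm₀.le)]
  rw [lintegral_const_mul' _ _ ENNReal.ofReal_ne_top, ENNReal.ofReal_div_of_pos hm₀,
    ENNReal.ofReal_toReal hm, ENNReal.div_mul_cancel (ENNReal.toReal_pos_iff.1 hm₀).1.ne' hm]

end LevelSets

section Necessity

variable {φ u v : ℝ → ℝ} {K lam x : ℝ} {α : ℝ≥0∞}

lemma lt_top_of_forall_lt_setLIntegral_Ioo (hu : Measurable u) (hv : Measurable v)
    (hv₀ : ∀ y ∈ Ioo 0 x, 0 < v y) (hmono : Monotone φ) (hnn : ∀ x, 0 ≤ φ x) (hK : 0 < K)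
    (hlam : 0 < lam) (hx : 0 < x)
    (htest : ∀ f : ℝ → ℝ, Measurable f → (∀ y, 0 ≤ f y) →
      ENNReal.ofReal lam < ∫⁻ y in Ioo 0 x, ENNReal.ofReal (f y) →
      α ≤ ∫⁻ y in Ioi 0, ENNReal.ofReal (young φ (K * u y * f y) * v y)) :
    α < ⊤ := by
  obtain ⟨M, hM⟩ := exists_measure_inter_setOf_le_natCast_pos (μ := volume) (s := Ioo 0 x)
    (by simpa using hx) u v
  set S := Ioo 0 x ∩ {y | u y ≤ M ∧ v y ≤ M}
  have hS : MeasurableSet S := measurableSet_Ioo.inter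
    ((measurableSet_le hu measurable_const).inter (measurableSet_le hv measurable_const))
  have hSfin : volume S ≠ ⊤ := ((measure_mono inter_subset_left).trans_lt measure_Ioo_lt_top).ne
  have hℓ : 0 < (volume S).toReal := ENNReal.toReal_pos hM.ne' hSfin
  set c := 2 * lam / (volume S).toReal
  have hc : 0 ≤ c := by positivity
  set f := S.indicator fun _ => c
  have hf : (fun y => ENNReal.ofReal (f y)) = S.indicator fun _ => ENNReal.ofReal c :=
    (indicator_comp_of_zero (g := ENNReal.ofReal) ENNReal.ofReal_zero).symm
  have hmass : ENNReal.ofReal lam < ∫⁻ y in Ioo 0 x, ENNReal.ofReal (f y) := by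
    rw [hf, lintegral_indicator_const hS, Measure.restrict_apply hS,
      inter_eq_left.2 inter_subset_left, ENNReal.ofReal_div_of_pos hℓ, ENNReal.ofReal_toReal hSfin,
      ENNReal.div_mul_cancel hM.ne' hSfin]
    exact (ENNReal.ofReal_lt_ofReal_iff (by positivity)).2 (by linarith)
  have hcost : ∀ y, ENNReal.ofReal (young φ (K * u y * f y) * v y) ≤
      S.indicator (fun _ => ENNReal.ofReal (young φ (K * M * c) * M)) y := by
    intro y
    by_cases hy : y ∈ S
    · rw [indicator_of_mem hy, show f y = c from indicator_of_mem hy _]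
      obtain ⟨hy₀, huM, hvM⟩ := hy
      exact ENNReal.ofReal_le_ofReal (mul_le_mul (young_mono hmono hnn (by gcongr)) hvM
        (hv₀ y hy₀).le (young_nonneg hnn (by positivity)))
    · simp [f, indicator_of_notMem hy, young_zero]
  calc α ≤ ∫⁻ y in Ioi 0, ENNReal.ofReal (young φ (K * u y * f y) * v y) :=
        htest f (measurable_const.indicator hS) (indicator_nonneg fun _ _ => hc) hmass
    _ ≤ ∫⁻ y, S.indicator (fun _ => ENNReal.ofReal (young φ (K * M * c) * M)) y :=
        (setLIntegral_le_lintegral _ _).trans (lintegral_mono hcost)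
    _ < ⊤ := by
        rw [lintegral_indicator_const hS]
        exact ENNReal.mul_lt_top ENNReal.ofReal_lt_top hSfin.lt_top

/-- If `∫ f₀ > 2λ`, a rescaled truncation `g ≤ f₀` of mass `2λ` is a test function giving
`α ≤ 2λκ`. -/
lemma setLIntegral_Ioo_le_of_forall_young_le (hlam : 0 < lam) {f₀ : ℝ → ℝ} (hf₀ : Measurable f₀)
    (hf₀nn : ∀ y, 0 ≤ f₀ y) (hsupp : ∀ y ∉ Ioo 0 x, f₀ y = 0) {κ : ℝ} (hκ : 0 ≤ κ)
    (hΦ : ∀ g : ℝ → ℝ, (∀ y, 0 ≤ g y ∧ g y ≤ f₀ y) →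
      ∀ y, young φ (K * u y * g y) * v y ≤ κ * g y)
    (hcost : ENNReal.ofReal κ * ENNReal.ofReal (2 * lam) < α)
    (htest : ∀ f : ℝ → ℝ, Measurable f → (∀ y, 0 ≤ f y) →
      ENNReal.ofReal lam < ∫⁻ y in Ioo 0 x, ENNReal.ofReal (f y) →
      α ≤ ∫⁻ y in Ioi 0, ENNReal.ofReal (young φ (K * u y * f y) * v y)) :
    ∫⁻ y in Ioo 0 x, ENNReal.ofReal (f₀ y) ≤ ENNReal.ofReal (2 * lam) := by
  by_contra! hD
  obtain ⟨g, hg, hgf, hgmass⟩ :=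
    exists_le_setLIntegral_eq hf₀ hf₀nn measure_Ioo_lt_top.ne (by positivity) hD
  have hg₀ : ∀ y ∉ Ioo 0 x, g y = 0 := fun y hy =>
    ((hgf y).2.trans (hsupp y hy).le).antisymm (hgf y).1
  refine hcost.not_ge ?_
  calc α ≤ ∫⁻ y in Ioi 0, ENNReal.ofReal (young φ (K * u y * g y) * v y) :=
        htest g hg (fun y => (hgf y).1)
          (hgmass ▸ (ENNReal.ofReal_lt_ofReal_iff (by positivity)).2 (by linarith))
    _ ≤ ∫⁻ y, ENNReal.ofReal (κ * g y) :=
        (setLIntegral_le_lintegral _ _).trans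
          (lintegral_mono fun y => ENNReal.ofReal_le_ofReal (hΦ g hgf y))
    _ = ∫⁻ y in Ioo 0 x, ENNReal.ofReal (κ * g y) :=
        (setLIntegral_eq_of_support_subset
          (Function.support_subset_iff'.2 fun y hy => by simp [hg₀ y hy])).symm
    _ = ENNReal.ofReal κ * ENNReal.ofReal (2 * lam) := by
        simp_rw [ENNReal.ofReal_mul hκ]
        rw [lintegral_const_mul' _ _ ENNReal.ofReal_ne_top, hgmass]

/-- The test function is `f₀ = φ⁻¹(s) / (Ku)` on `(0, x)`, `s = α / (3Kλuv)`: it has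
`Ψ(s) v ≤ α f₀ / 3λ`, and `∫ f₀ ≤ 2λ`. -/
lemma setLIntegral_coYoung_le_of_forall_lt_setLIntegral_Ioo (hu : Measurable u)
    (hv : Measurable v) (hu₀ : ∀ y ∈ Ioo 0 x, 0 < u y) (hv₀ : ∀ y ∈ Ioo 0 x, 0 < v y)
    (hmono : Monotone φ) (htop : Tendsto φ atTop atTop) (hK : 0 < K) (hlam : 0 < lam)
    (hα : α ≠ ⊤)
    (htest : ∀ f : ℝ → ℝ, Measurable f → (∀ y, 0 ≤ f y) →
      ENNReal.ofReal lam < ∫⁻ y in Ioo 0 x, ENNReal.ofReal (f y) →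
      α ≤ ∫⁻ y in Ioi 0, ENNReal.ofReal (young φ (K * u y * f y) * v y)) :
    ∫⁻ y in Ioo 0 x, ENNReal.ofReal (coYoung φ (α.toReal / (3 * K * lam * u y * v y)) * v y)
      ≤ α := by
  rcases eq_or_ne α 0 with rfl | hα₀
  · simp [coYoung_zero]
  set a := α.toReal
  have ha : 0 < a := ENNReal.toReal_pos hα₀ hα
  have hκ : 0 ≤ a / (3 * lam) := by positivity
  set f₀ := (Ioo 0 x).indicator fun y => geninv φ (a / (3 * K * lam * u y * v y)) / (K * u y)
  have hf₀ : Measurable f₀ := (((geninv_mono htop).measurable.comp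
    (measurable_const.div ((measurable_const.mul hu).mul hv))).div
    (measurable_const.mul hu)).indicator measurableSet_Ioo
  have hf₀nn : ∀ y, 0 ≤ f₀ y := indicator_nonneg fun y hy =>
    div_nonneg (geninv_nonneg _ _) (mul_nonneg hK.le (hu₀ y hy).le)
  have hΦ : ∀ g : ℝ → ℝ, (∀ y, 0 ≤ g y ∧ g y ≤ f₀ y) →
      ∀ y, young φ (K * u y * g y) * v y ≤ a / (3 * lam) * g y := by
    intro g hg y
    by_cases hy : y ∈ Ioo 0 x
    · exact young_mul_le hmono three_pos hK hlam (hu₀ y hy) (hv₀ y hy) (hg y).1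
        ((hg y).2.trans_eq (indicator_of_mem hy _))
    · have : g y = 0 := ((hg y).2.trans (indicator_of_notMem hy _).le).antisymm (hg y).1
      simp [this, young_zero]
  have hcost : ENNReal.ofReal (a / (3 * lam)) * ENNReal.ofReal (2 * lam) < α := by
    rw [← ENNReal.ofReal_mul hκ, ← ENNReal.ofReal_toReal hα]
    exact (ENNReal.ofReal_lt_ofReal_iff ha).2 (by field_simp; linarith)
  calc _ ≤ ∫⁻ y in Ioo 0 x, ENNReal.ofReal (a / (3 * lam) * f₀ y) :=
        setLIntegral_mono' measurableSet_Ioo fun y hy => ENNReal.ofReal_le_ofReal <|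
          (coYoung_mul_le htop ha.le three_pos hK hlam (hu₀ y hy) (hv₀ y hy)).trans_eq
            (by rw [show f₀ y = _ from indicator_of_mem hy _])
    _ = ENNReal.ofReal (a / (3 * lam)) * ∫⁻ y in Ioo 0 x, ENNReal.ofReal (f₀ y) := by
        simp_rw [ENNReal.ofReal_mul hκ]
        exact lintegral_const_mul' _ _ ENNReal.ofReal_ne_top
    _ ≤ ENNReal.ofReal (a / (3 * lam)) * ENNReal.ofReal (2 * lam) := by
        gcongr
        exact setLIntegral_Ioo_le_of_forall_young_le hlam hf₀ hf₀nn
          (fun y hy => indicator_of_notMem hy _) hκ hΦ hcost htest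
    _ ≤ α := hcost.le

end Necessity

section Sufficiency

variable {φ u v : ℝ → ℝ} {C lam x : ℝ} {α : ℝ≥0∞}

lemma le_setLIntegral_young_of_setLIntegral_coYoung_le (hu : Measurable u) (hv : Measurable v)
    (hu₀ : ∀ y ∈ Ioo 0 x, 0 < u y) (hv₀ : ∀ y ∈ Ioo 0 x, 0 < v y) (hmono : Monotone φ)
    (hnn : ∀ x, 0 ≤ φ x) (htop : Tendsto φ atTop atTop) (hC : 0 < C) (hlam : 0 < lam)
    {f : ℝ → ℝ} (hf₀ : ∀ y, 0 ≤ f y) (hα : α ≠ ⊤)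
    (hcond : ∫⁻ y in Ioo 0 x,
      ENNReal.ofReal (coYoung φ (α.toReal / (C * lam * u y * v y)) * v y) ≤ α)
    (hlt : ENNReal.ofReal lam < ∫⁻ y in Ioo 0 x, ENNReal.ofReal (f y)) :
    α ≤ ∫⁻ y in Ioi 0, ENNReal.ofReal (young φ (2 * C * u y * f y) * v y) := by
  set a := α.toReal
  set R := ∫⁻ y in Ioi 0, ENNReal.ofReal (young φ (2 * C * u y * f y) * v y)
  have ha : 0 ≤ a := ENNReal.toReal_nonneg
  have hpt : ∀ y ∈ Ioo 0 x, ENNReal.ofReal (2 * a / lam * f y) ≤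
      ENNReal.ofReal (coYoung φ (a / (C * lam * u y * v y)) * v y) +
        ENNReal.ofReal (young φ (2 * C * u y * f y) * v y) :=
    fun y hy => (ENNReal.ofReal_le_ofReal (mul_le_coYoung_mul_add_young_mul hmono hnn htop ha hC
      hlam (hu₀ y hy) (hv₀ y hy) (hf₀ y))).trans ENNReal.ofReal_add_le
  have hmeas : Measurable fun y => ENNReal.ofReal (coYoung φ (a / (C * lam * u y * v y)) * v y) :=
    (((young_mono (geninv_mono htop) (geninv_nonneg φ)).measurable.comp
      (measurable_const.div (((measurable_const.mul hu).mul hv)))).mul hv).ennreal_ofReal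
  have key : ENNReal.ofReal (2 * a / lam) * ∫⁻ y in Ioo 0 x, ENNReal.ofReal (f y) ≤ α + R := calc
    _ = ∫⁻ y in Ioo 0 x, ENNReal.ofReal (2 * a / lam * f y) := by
        simp_rw [ENNReal.ofReal_mul (by positivity : 0 ≤ 2 * a / lam)]
        exact (lintegral_const_mul' _ _ ENNReal.ofReal_ne_top).symm
    _ ≤ _ := setLIntegral_mono' measurableSet_Ioo hpt
    _ = _ := lintegral_add_left hmeas _
    _ ≤ α + R := add_le_add hcond (lintegral_mono_set Ioo_subset_Ioi_self)
  have hdouble : α + α ≤ α + R := calc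
    α + α = ENNReal.ofReal (2 * a / lam) * ENNReal.ofReal lam := by
        rw [← ENNReal.ofReal_mul (by positivity), div_mul_cancel₀ _ hlam.ne', two_mul,
          ENNReal.ofReal_add ha ha, ENNReal.ofReal_toReal hα]
    _ ≤ ENNReal.ofReal (2 * a / lam) * ∫⁻ y in Ioo 0 x, ENNReal.ofReal (f y) := by gcongr
    _ ≤ α + R := key
  exact (ENNReal.add_le_add_iff_left hα).1 hdouble

end Sufficiency

theorem stmt15_general (t u v w : ℝ → ℝ)
    (hu : Measurable u) (hv : Measurable v)
    (hpos : ∀ x > (0:ℝ), 0 < t x ∧ 0 < u x ∧ 0 < v x ∧ 0 < w x)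
    (Φ₁ : ℝ → ℝ)
    (φ₂ : ℝ → ℝ) (hφ₂mono : Monotone φ₂) (hφ₂nn : ∀ x, 0 ≤ φ₂ x)
    (hφ₂top : Filter.Tendsto φ₂ Filter.atTop Filter.atTop) :
    (∃ K > (0:ℝ), ∀ f : ℝ → ℝ, Measurable f → (∀ y, 0 ≤ f y) → ∀ lam > (0:ℝ),
        ∫⁻ x in {x : ℝ | x ∈ Ioi (0:ℝ) ∧
            ENNReal.ofReal lam < ∫⁻ y in Ioo (0:ℝ) x, ENNReal.ofReal (f y)},
            ENNReal.ofReal (Φ₁ (lam * w x) * t x) ≤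
          ∫⁻ y in Ioi (0:ℝ), ENNReal.ofReal (young φ₂ (K * u y * f y) * v y)) ↔
    (∃ C > (0:ℝ), ∀ lam > (0:ℝ), ∀ x > (0:ℝ),
        (∫⁻ y in Ioi x, ENNReal.ofReal (Φ₁ (lam * w y) * t y)) < ⊤ ∧
        ∫⁻ y in Ioo (0:ℝ) x,
            ENNReal.ofReal (coYoung φ₂
              ((∫⁻ z in Ioi x, ENNReal.ofReal (Φ₁ (lam * w z) * t z)).toReal /
                (C * lam * u y * v y)) * v y) ≤
          ∫⁻ y in Ioi x, ENNReal.ofReal (Φ₁ (lam * w y) * t y)) := by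
  have hu₀ : ∀ x, ∀ y ∈ Ioo 0 x, 0 < u y := fun _ y hy => (hpos y hy.1).2.1
  have hv₀ : ∀ x, ∀ y ∈ Ioo 0 x, 0 < v y := fun _ y hy => (hpos y hy.1).2.2.1
  constructor
  · rintro ⟨K, hK, hweak⟩
    refine ⟨3 * K, by positivity, fun lam hlam x hx => ?_⟩
    have htest : ∀ f : ℝ → ℝ, Measurable f → (∀ y, 0 ≤ f y) →
        ENNReal.ofReal lam < ∫⁻ y in Ioo 0 x, ENNReal.ofReal (f y) →
        ∫⁻ y in Ioi x, ENNReal.ofReal (Φ₁ (lam * w y) * t y) ≤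
          ∫⁻ y in Ioi 0, ENNReal.ofReal (young φ₂ (K * u y * f y) * v y) :=
      fun f hf hf₀ hlt =>
        (setLIntegral_Ioi_le_of_lt_setLIntegral_Ioo _ hx hlt).trans (hweak f hf hf₀ lam hlam)
    have hfin := lt_top_of_forall_lt_setLIntegral_Ioo hu hv (hv₀ x) hφ₂mono hφ₂nn hK hlam hx htest
    exact ⟨hfin, setLIntegral_coYoung_le_of_forall_lt_setLIntegral_Ioo hu hv (hu₀ x) (hv₀ x)
      hφ₂mono hφ₂top hK hlam hfin.ne htest⟩
  · rintro ⟨C, hC, hcond⟩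
    refine ⟨2 * C, by positivity, fun f _ hf₀ lam hlam => ?_⟩
    refine setLIntegral_le_of_forall_setLIntegral_Ioi_le ⟨0, fun z hz => le_of_lt hz.1⟩
      fun x hx => ?_
    obtain ⟨hfin, hΨ⟩ := hcond lam hlam x hx.1
    exact le_setLIntegral_young_of_setLIntegral_coYoung_le hu hv (hu₀ x) (hv₀ x) hφ₂mono hφ₂nn
      hφ₂top hC hlam hf₀ hfin.ne hΨ hx.2

theorem stmt15 (t u v w : ℝ → ℝ)
    (ht : Measurable t) (hu : Measurable u) (hv : Measurable v) (hw : Measurable w)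
    (hpos : ∀ x > (0:ℝ), 0 < t x ∧ 0 < u x ∧ 0 < v x ∧ 0 < w x)
    (Φ₁ : ℝ → ℝ) (hΦ₁mono : MonotoneOn Φ₁ (Ioi 0)) (hΦ₁nn : ∀ x, 0 ≤ Φ₁ x)
    (φ₂ : ℝ → ℝ) (hφ₂mono : Monotone φ₂) (hφ₂nn : ∀ x, 0 ≤ φ₂ x) (hφ₂0 : φ₂ 0 = 0)
    (hφ₂0plus : Filter.Tendsto φ₂ (nhdsWithin 0 (Ioi 0)) (nhds 0))
    (hφ₂top : Filter.Tendsto φ₂ Filter.atTop Filter.atTop) :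
    (∃ K > (0:ℝ), ∀ f : ℝ → ℝ, Measurable f → (∀ y, 0 ≤ f y) → ∀ lam > (0:ℝ),
        ∫⁻ x in {x : ℝ | x ∈ Ioi (0:ℝ) ∧
            ENNReal.ofReal lam < ∫⁻ y in Ioo (0:ℝ) x, ENNReal.ofReal (f y)},
            ENNReal.ofReal (Φ₁ (lam * w x) * t x) ≤
          ∫⁻ y in Ioi (0:ℝ), ENNReal.ofReal (young φ₂ (K * u y * f y) * v y)) ↔
    (∃ C > (0:ℝ), ∀ lam > (0:ℝ), ∀ x > (0:ℝ),
        (∫⁻ y in Ioi x, ENNReal.ofReal (Φ₁ (lam * w y) * t y)) < ⊤ ∧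
        ∫⁻ y in Ioo (0:ℝ) x,
            ENNReal.ofReal (coYoung φ₂
              ((∫⁻ z in Ioi x, ENNReal.ofReal (Φ₁ (lam * w z) * t z)).toReal /
                (C * lam * u y * v y)) * v y) ≤
          ∫⁻ y in Ioi x, ENNReal.ofReal (Φ₁ (lam * w y) * t y)) :=
  stmt15_general t u v w hu hv hpos Φ₁ φ₂ hφ₂mono hφ₂nn hφ₂top
end

section
/- Define χ : (0,∞) → (0,∞) by χ(t) = log(e/t) for 0 < t ≤ 1, and for k ≥ 0 with a₀ = 1, a_k = (k+3)! (k ≥ 1): χ(t) = 2^{-k}(1 − (t − a_k)/2) for a_k < t ≤ a_k + 1, and χ(t) = 2^{-(k+1)} for a_k + 1 < t ≤ a_{k+1}. Then for every k ≥ 0, (1/a_k) ∫_0^{a_k} χ(s) ds ≤ 2 χ(a_k). -/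
/-!
On `(0, 1]` the function is `1 - log t`, with integral `2`. Past `a k` it spends one unit of
length on a ramp from `2⁻ᵏ` down to `2⁻ᵏ / 2`, worth `3/4 · 2⁻ᵏ`, and then stays at `2⁻ᵏ / 2`
up to `a (k+1)`. So the bound `∫₀^{a k} χ ≤ 2 · 2⁻ᵏ · a k` passes from `k` to `k + 1` as soon as
`3 a k + 1/2 ≤ a (k+1)`, which the factorials satisfy since `(k+4)! = (k+4) · (k+3)!`.
-/

open MeasureTheory Set Real

theorem integral_ramp (A c : ℝ) : ∫ t in c..c + 1, A * (1 - (t - c) / 2) = 3 / 4 * A := by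
  rw [intervalIntegral.integral_comp_sub_right (fun x => A * (1 - x / 2))]
  norm_num
  ring

theorem intervalIntegrable_and_integral_eq_of_eqOn_Ioc {f g : ℝ → ℝ} {a b : ℝ}
    (hab : a ≤ b) (hfg : EqOn f g (Ioc a b)) (hg : IntervalIntegrable g volume a b) :
    IntervalIntegrable f volume a b ∧ ∫ x in a..b, f x = ∫ x in a..b, g x :=
  ⟨(intervalIntegrable_congr (uIoc_of_le hab ▸ hfg)).2 hg,
    intervalIntegral.integral_congr_Ioo_of_le hab (hfg.mono Ioo_subset_Ioc_self)⟩

theorem intervalIntegrable_and_integral_zero_one_of_eq_log {f : ℝ → ℝ}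
    (hf : ∀ t, 0 < t → t ≤ 1 → f t = log (exp 1 / t)) :
    IntervalIntegrable f volume 0 1 ∧ ∫ t in (0:ℝ)..1, f t = 2 := by
  have hfg : EqOn f (fun t => 1 - log t) (Ioc 0 1) := fun t ht => by
    rw [hf t ht.1 ht.2, log_div (exp_ne_zero 1) ht.1.ne', log_exp]
  have hlog : IntervalIntegrable log volume 0 1 := intervalIntegral.intervalIntegrable_log'
  refine (intervalIntegrable_and_integral_eq_of_eqOn_Ioc zero_le_one hfg
    (intervalIntegrable_const.sub hlog)).imp_right fun h => ?_
  rw [h, intervalIntegral.integral_sub intervalIntegrable_const hlog, integral_log_from_zero]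
  norm_num

theorem intervalIntegrable_and_integral_ramp_then_const {f : ℝ → ℝ} {A c d : ℝ}
    (hcd : c + 1 ≤ d)
    (hramp : ∀ t, c < t → t ≤ c + 1 → f t = A * (1 - (t - c) / 2))
    (hconst : ∀ t, c + 1 < t → t ≤ d → f t = A / 2) :
    IntervalIntegrable f volume c d ∧ ∫ t in c..d, f t = 3 / 4 * A + (d - c - 1) * (A / 2) := by
  obtain ⟨hint₁, hval₁⟩ := intervalIntegrable_and_integral_eq_of_eqOn_Ioc (by linarith)
    (fun t ht => hramp t ht.1 ht.2)
    ((by fun_prop : Continuous fun t => A * (1 - (t - c) / 2)).intervalIntegrable _ _)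
  obtain ⟨hint₂, hval₂⟩ := intervalIntegrable_and_integral_eq_of_eqOn_Ioc hcd
    (fun t ht => hconst t ht.1 ht.2) (intervalIntegrable_const (c := A / 2))
  refine ⟨hint₁.trans hint₂, ?_⟩
  rw [← intervalIntegral.integral_add_adjacent_intervals hint₁ hint₂, hval₁, hval₂,
    integral_ramp, intervalIntegral.integral_const, smul_eq_mul]
  ring

theorem integral_le_of_ramp_blocks (a : ℕ → ℝ) (f : ℝ → ℝ) (hnonneg : ∀ k, 0 ≤ a k)
    (hgrowth : ∀ k, 3 * a k + 1 ≤ a (k + 1))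
    (hint₀ : IntervalIntegrable f volume 0 (a 0)) (hle₀ : ∫ t in (0:ℝ)..a 0, f t ≤ 2 * a 0)
    (hramp : ∀ (k : ℕ) (t : ℝ), a k < t → t ≤ a k + 1 →
      f t = ((2:ℝ) ^ k)⁻¹ * (1 - (t - a k) / 2))
    (hconst : ∀ (k : ℕ) (t : ℝ), a k + 1 < t → t ≤ a (k + 1) → f t = ((2:ℝ) ^ (k + 1))⁻¹) :
    ∀ k, IntervalIntegrable f volume 0 (a k) ∧
      ∫ t in (0:ℝ)..a k, f t ≤ 2 * ((2:ℝ) ^ k)⁻¹ * a k := by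
  intro k
  induction k with
  | zero => simpa using ⟨hint₀, hle₀⟩
  | succ k ih =>
    have hhalf : ((2:ℝ) ^ (k + 1))⁻¹ = ((2:ℝ) ^ k)⁻¹ / 2 := by
      rw [pow_succ, mul_inv, div_eq_mul_inv]
    obtain ⟨hint, hval⟩ := intervalIntegrable_and_integral_ramp_then_const
      (by linarith [hgrowth k, hnonneg k]) (hramp k) (hhalf ▸ hconst k)
    refine ⟨ih.1.trans hint, ?_⟩
    rw [← intervalIntegral.integral_add_adjacent_intervals ih.1 hint, hval, hhalf]
    have hpow : 0 < ((2:ℝ) ^ k)⁻¹ := by positivity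
    nlinarith [ih.2, hgrowth k, hpow]

theorem three_mul_factorial_add_one_le (n : ℕ) :
    3 * (n + 3).factorial + 1 ≤ (n + 4).factorial := by
  rw [Nat.factorial_succ (n + 3)]
  nlinarith [Nat.factorial_pos (n + 3)]

theorem stmt17 (a : ℕ → ℝ) (ha0 : a 0 = 1)
    (hak : ∀ k : ℕ, 1 ≤ k → a k = (Nat.factorial (k + 3) : ℝ))
    (χ : ℝ → ℝ)
    (hχlog : ∀ t : ℝ, 0 < t → t ≤ 1 → χ t = Real.log (Real.exp 1 / t))
    (hχlin : ∀ (k : ℕ) (t : ℝ), a k < t → t ≤ a k + 1 →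
      χ t = ((2:ℝ) ^ k)⁻¹ * (1 - (t - a k) / 2))
    (hχconst : ∀ (k : ℕ) (t : ℝ), a k + 1 < t → t ≤ a (k + 1) →
      χ t = ((2:ℝ) ^ (k + 1))⁻¹) :
    ∀ k : ℕ, (1 / a k) * ∫ s in (0:ℝ)..(a k), χ s ≤ 2 * χ (a k) := by
  have hgrowth : ∀ k, 3 * a k + 1 ≤ a (k + 1) := by
    rintro (_ | k)
    · rw [ha0, hak 1 le_rfl]
      norm_num [Nat.factorial]
    · rw [hak _ k.succ_pos, hak _ (k + 1).succ_pos]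
      exact_mod_cast three_mul_factorial_add_one_le (k + 1)
  have hone : ∀ k, 1 ≤ a k := fun k => Nat.rec ha0.ge (fun k ih => by linarith [hgrowth k]) k
  have hχa : ∀ k, χ (a k) = ((2:ℝ) ^ k)⁻¹ := by
    rintro (_ | k)
    · simp [ha0, hχlog 1 one_pos le_rfl]
    · exact hχconst k _ (by linarith [hgrowth k, hone k]) le_rfl
  obtain ⟨hint₀, hval₀⟩ := intervalIntegrable_and_integral_zero_one_of_eq_log hχlog
  have hbound := integral_le_of_ramp_blocks a χ (fun k => zero_le_one.trans (hone k)) hgrowth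
    (ha0 ▸ hint₀) (by rw [ha0, hval₀]; norm_num) hχlin hχconst
  intro k
  rw [hχa k, one_div, inv_mul_le_iff₀ (by linarith [hone k])]
  linarith [(hbound k).2]
end

section
/- With χ defined as in the preceding construction (χ(t) = log(e/t) on (0,1], and piecewise linear/constant with values ≈ 2^{-k} on (a_k, a_{k+1}] where a_k = (k+3)!), the averaged function satisfies (1/t) ∫_0^t χ(s) ds ≤ 4 χ(t/4^{1/γ}) for all t > 0 and any fixed γ > 0, yet there is no constant C with (1/t) ∫_0^t χ(s) ds ≤ χ(t/C^{1/γ}) for all t, since (1/a_k) ∫_0^{a_k} χ ≥ 2^{-k} = χ(a_k/k) for all k ≥ 1. -/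
/-!
On `(0, 1]` the average of `χ` is `2 - log t ≤ 4 χ t`. Beyond `1`, `χ` lies between `2⁻⁽ᵏ⁺¹⁾`
and `2⁻ᵏ` on `(a k, a (k + 1)]`, and since `a` grows at least fourfold per step,
`∫₀^{a k} χ ≤ 2 · 2⁻ᵏ a k`. So for `t ∈ (a k, a (k + 1)]` the average over `(0, t]` is at most
`2 · 2⁻ᵏ ≤ 4 χ (t / c)` for every `c ≥ 1`, because `t / c ≤ a (k + 1)`.

Conversely, the logarithmic mass near `0` makes the average over `(0, a k]` exceed `2⁻ᵏ`, while
`χ (a (j + 1) / c) = 2⁻⁽ʲ⁺¹⁾` as soon as `c ≤ j + 1`: the point `a (j + 1) / (j + 1)` still lies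
on the flat step, as `(j + 1) (a j + 1) < a (j + 1) = (j + 4) a j`.
-/

open MeasureTheory Set Real intervalIntegral

theorem inv_two_pow_succ (k : ℕ) : ((2 : ℝ) ^ (k + 1))⁻¹ = ((2 : ℝ) ^ k)⁻¹ / 2 := by
  rw [pow_succ, mul_inv, div_eq_mul_inv]

structure IsLogStaircase (a : ℕ → ℝ) (χ : ℝ → ℝ) : Prop where
  seq_zero : a 0 = 1
  four_mul_le_seq_succ : ∀ k, 4 * a k ≤ a (k + 1)
  eq_log : ∀ t, 0 < t → t ≤ 1 → χ t = log (exp 1 / t)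
  eq_ramp : ∀ k t, a k < t → t ≤ a k + 1 → χ t = ((2 : ℝ) ^ k)⁻¹ * (1 - (t - a k) / 2)
  eq_step : ∀ k t, a k + 1 < t → t ≤ a (k + 1) → χ t = ((2 : ℝ) ^ (k + 1))⁻¹

namespace IsLogStaircase

variable {a : ℕ → ℝ} {χ : ℝ → ℝ}

theorem one_le_seq (h : IsLogStaircase a χ) (k : ℕ) : 1 ≤ a k := by
  induction k with
  | zero => rw [h.seq_zero]
  | succ k ih => linarith [h.four_mul_le_seq_succ k]

theorem seq_add_three_le (h : IsLogStaircase a χ) (k : ℕ) : a k + 3 ≤ a (k + 1) := by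
  linarith [h.one_le_seq k, h.four_mul_le_seq_succ k]

theorem seq_pos (h : IsLogStaircase a χ) (k : ℕ) : 0 < a k :=
  one_pos.trans_le (h.one_le_seq k)

theorem monotone_seq (h : IsLogStaircase a χ) : Monotone a :=
  monotone_nat_of_le_succ fun k => by linarith [h.seq_add_three_le k]

theorem natCast_le_seq (h : IsLogStaircase a χ) (k : ℕ) : (k : ℝ) ≤ a k := by
  induction k with
  | zero => simpa using (h.seq_pos 0).le
  | succ k ih => push_cast; linarith [h.seq_add_three_le k]

theorem exists_seq_lt_le (h : IsLogStaircase a χ) {t : ℝ} (ht : 1 < t) :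
    ∃ k, a k < t ∧ t ≤ a (k + 1) := by
  classical
  have hex : ∃ n, t ≤ a n := ⟨⌈t⌉₊, (Nat.le_ceil t).trans (h.natCast_le_seq _)⟩
  obtain ⟨k, hk⟩ : ∃ k, Nat.find hex = k + 1 := Nat.exists_eq_succ_of_ne_zero fun h0 => by
    have := Nat.find_spec hex
    rw [h0, h.seq_zero] at this
    linarith
  refine ⟨k, lt_of_not_ge fun hle => ?_, hk ▸ Nat.find_spec hex⟩
  have := Nat.find_min' hex hle
  omega

theorem apply_eq_one_sub_log (h : IsLogStaircase a χ) {t : ℝ} (ht0 : 0 < t) (ht1 : t ≤ 1) :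
    χ t = 1 - log t := by
  rw [h.eq_log t ht0 ht1, log_div (exp_ne_zero 1) ht0.ne', log_exp]

theorem inv_two_pow_le_apply (h : IsLogStaircase a χ) {k : ℕ} {t : ℝ} (ht0 : 0 < t)
    (htk : t ≤ a k) : ((2 : ℝ) ^ k)⁻¹ ≤ χ t := by
  induction k with
  | zero =>
    rw [h.seq_zero] at htk
    rw [h.apply_eq_one_sub_log ht0 htk]
    simpa using log_nonpos ht0.le htk
  | succ k ih =>
    rw [inv_two_pow_succ]
    have hpos : (0 : ℝ) < ((2 : ℝ) ^ k)⁻¹ := by positivity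
    rcases le_or_gt t (a k) with hle | hlt
    · linarith [ih hle]
    rcases le_or_gt t (a k + 1) with hramp | hstep
    · rw [h.eq_ramp k t hlt hramp]
      nlinarith
    · rw [h.eq_step k t hstep htk, inv_two_pow_succ]

theorem apply_le_inv_two_pow (h : IsLogStaircase a χ) {k : ℕ} {t : ℝ} (hkt : a k < t) :
    χ t ≤ ((2 : ℝ) ^ k)⁻¹ := by
  obtain ⟨j, hjt, htj⟩ := h.exists_seq_lt_le ((h.one_le_seq k).trans_lt hkt)
  have hkj : k ≤ j := by
    by_contra! hjk
    exact (hkt.trans_le htj).not_ge (h.monotone_seq hjk)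
  have hpos : (0 : ℝ) < ((2 : ℝ) ^ j)⁻¹ := by positivity
  calc χ t ≤ ((2 : ℝ) ^ j)⁻¹ := by
        rcases le_or_gt t (a j + 1) with hramp | hstep
        · rw [h.eq_ramp j t hjt hramp]
          nlinarith
        · rw [h.eq_step j t hstep htj, inv_two_pow_succ]
          linarith
    _ ≤ ((2 : ℝ) ^ k)⁻¹ := by gcongr; norm_num

theorem intervalIntegrable_zero_seq (h : IsLogStaircase a χ) (k : ℕ) :
    IntervalIntegrable χ volume 0 (a k) := by
  induction k with
  | zero =>
    rw [h.seq_zero]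
    refine ((intervalIntegrable_const (c := 1)).sub intervalIntegrable_log').congr_uIoo
      fun t ht => ?_
    rw [uIoo_of_le zero_le_one] at ht
    exact (h.apply_eq_one_sub_log ht.1 ht.2.le).symm
  | succ k ih =>
    have hramp : IntervalIntegrable χ volume (a k) (a k + 1) := by
      refine (Continuous.intervalIntegrable (by fun_prop :
        Continuous fun t => ((2 : ℝ) ^ k)⁻¹ * (1 - (t - a k) / 2)) _ _).congr_uIoo fun t ht => ?_
      rw [uIoo_of_le (by linarith)] at ht
      exact (h.eq_ramp k t ht.1 ht.2.le).symm
    have hstep : IntervalIntegrable χ volume (a k + 1) (a (k + 1)) := by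
      refine (intervalIntegrable_const (c := ((2 : ℝ) ^ (k + 1))⁻¹)).congr_uIoo fun t ht => ?_
      rw [uIoo_of_le (by linarith [h.seq_add_three_le k])] at ht
      exact (h.eq_step k t ht.1 ht.2.le).symm
    exact (ih.trans hramp).trans hstep

theorem intervalIntegrable (h : IsLogStaircase a χ) {x y : ℝ} (hx : 0 ≤ x) (hy : 0 ≤ y) :
    IntervalIntegrable χ volume x y := by
  have hzero {t : ℝ} (ht : 0 ≤ t) : IntervalIntegrable χ volume 0 t :=
    (h.intervalIntegrable_zero_seq ⌈t⌉₊).mono_set <| by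
      rw [uIcc_of_le ht, uIcc_of_le (h.seq_pos _).le]
      exact Icc_subset_Icc_right ((Nat.le_ceil t).trans (h.natCast_le_seq _))
  exact (hzero hx).symm.trans (hzero hy)

theorem integral_of_le_one (h : IsLogStaircase a χ) {t : ℝ} (ht0 : 0 ≤ t) (ht1 : t ≤ 1) :
    ∫ s in 0..t, χ s = 2 * t - t * log t := by
  rw [integral_congr_Ioo_of_le ht0 (g := fun s => 1 - log s)
      fun s hs => h.apply_eq_one_sub_log hs.1 (hs.2.le.trans ht1),
    integral_sub intervalIntegrable_const intervalIntegrable_log', integral_log,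
    intervalIntegral.integral_const]
  simp only [smul_eq_mul, mul_one, sub_zero, log_zero, mul_zero]
  ring

theorem integral_le_of_seq_le (h : IsLogStaircase a χ) {k : ℕ} {x y : ℝ} (hx : a k ≤ x)
    (hxy : x ≤ y) : ∫ s in x..y, χ s ≤ (y - x) * ((2 : ℝ) ^ k)⁻¹ := by
  have hx0 : 0 ≤ x := (h.seq_pos k).le.trans hx
  calc ∫ s in x..y, χ s ≤ ∫ _ in x..y, ((2 : ℝ) ^ k)⁻¹ :=
        integral_mono_on_of_le_Ioo hxy (h.intervalIntegrable hx0 (hx0.trans hxy))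
          intervalIntegrable_const fun s hs => h.apply_le_inv_two_pow (hx.trans_lt hs.1)
    _ = (y - x) * ((2 : ℝ) ^ k)⁻¹ := by simp

theorem integral_zero_seq_le (h : IsLogStaircase a χ) (k : ℕ) :
    ∫ s in 0..a k, χ s ≤ 2 * ((2 : ℝ) ^ k)⁻¹ * a k := by
  induction k with
  | zero => simp [h.seq_zero, h.integral_of_le_one zero_le_one le_rfl]
  | succ k ih =>
    have hk := h.seq_pos k
    have hgrow := h.seq_add_three_le k
    have hsplit₁ := integral_add_adjacent_intervals (a := 0) (b := a k) (c := a (k + 1))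
      (h.intervalIntegrable le_rfl hk.le) (h.intervalIntegrable hk.le (by linarith))
    have hsplit₂ := integral_add_adjacent_intervals (a := a k) (b := a k + 1) (c := a (k + 1))
      (h.intervalIntegrable hk.le (by linarith)) (h.intervalIntegrable (by linarith) (by linarith))
    have hramp : ∫ s in a k..a k + 1, χ s ≤ (a k + 1 - a k) * ((2 : ℝ) ^ k)⁻¹ :=
      h.integral_le_of_seq_le le_rfl (by linarith)
    have hflat : ∫ s in a k + 1..a (k + 1), χ s
        = (a (k + 1) - (a k + 1)) * ((2 : ℝ) ^ (k + 1))⁻¹ := by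
      rw [integral_congr_Ioo_of_le (by linarith) (g := fun _ => ((2 : ℝ) ^ (k + 1))⁻¹)
          fun s hs => h.eq_step k s hs.1 hs.2.le,
        intervalIntegral.integral_const, smul_eq_mul]
    have hpos : (0 : ℝ) < ((2 : ℝ) ^ k)⁻¹ := by positivity
    rw [inv_two_pow_succ] at hflat ⊢
    nlinarith [h.four_mul_le_seq_succ k]

theorem inv_two_pow_lt_average (h : IsLogStaircase a χ) (k : ℕ) :
    ((2 : ℝ) ^ k)⁻¹ < (1 / a k) * ∫ s in 0..a k, χ s := by
  have hk := h.one_le_seq k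
  rw [one_div_mul_eq_div, lt_div_iff₀ (by linarith)]
  have hlog : ∫ s in 0..1, χ s = 2 := by simp [h.integral_of_le_one zero_le_one le_rfl]
  have htail : (a k - 1) * ((2 : ℝ) ^ k)⁻¹ ≤ ∫ s in 1..a k, χ s := by
    calc (a k - 1) * ((2 : ℝ) ^ k)⁻¹ = ∫ _ in 1..a k, ((2 : ℝ) ^ k)⁻¹ := by simp
      _ ≤ ∫ s in 1..a k, χ s :=
        integral_mono_on_of_le_Ioo hk intervalIntegrable_const
          (h.intervalIntegrable zero_le_one (by linarith))
          fun s hs => h.inv_two_pow_le_apply (one_pos.trans hs.1) hs.2.le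
  have hsmall : ((2 : ℝ) ^ k)⁻¹ ≤ 1 := inv_le_one_of_one_le₀ (one_le_pow₀ one_le_two)
  have hsplit := integral_add_adjacent_intervals (a := 0) (b := 1) (c := a k)
    (h.intervalIntegrable le_rfl zero_le_one) (h.intervalIntegrable zero_le_one (by linarith))
  linarith

theorem average_le (h : IsLogStaircase a χ) {c t : ℝ} (hc : 1 ≤ c) (ht : 0 < t) :
    (1 / t) * ∫ s in 0..t, χ s ≤ 4 * χ (t / c) := by
  have htc0 : 0 < t / c := div_pos ht (by linarith)
  have htc : t / c ≤ t := div_le_self ht.le hc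
  rw [one_div_mul_eq_div, div_le_iff₀ ht]
  rcases le_or_gt t 1 with ht1 | ht1
  · rw [h.integral_of_le_one ht.le ht1, h.apply_eq_one_sub_log htc0 (htc.trans ht1),
      log_div ht.ne' (by linarith)]
    nlinarith [log_nonpos ht.le ht1, log_nonneg hc]
  · obtain ⟨k, hkt, htk⟩ := h.exists_seq_lt_le ht1
    have hk := h.one_le_seq k
    have hχ : ((2 : ℝ) ^ k)⁻¹ / 2 ≤ χ (t / c) :=
      inv_two_pow_succ k ▸ h.inv_two_pow_le_apply htc0 (htc.trans htk)
    have hpos : (0 : ℝ) < ((2 : ℝ) ^ k)⁻¹ := by positivity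
    have hsplit := integral_add_adjacent_intervals (a := 0) (b := a k) (c := t)
      (h.intervalIntegrable le_rfl (by linarith)) (h.intervalIntegrable (by linarith) ht.le)
    nlinarith [h.integral_zero_seq_le k, h.integral_le_of_seq_le le_rfl hkt.le]

theorem apply_seq_succ_div (h : IsLogStaircase a χ) {j : ℕ} {c : ℝ} (hc : 1 ≤ c)
    (hgap : c * (a j + 1) < a (j + 1)) : χ (a (j + 1) / c) = ((2 : ℝ) ^ (j + 1))⁻¹ :=
  h.eq_step j _ (by rwa [lt_div_iff₀ (by linarith), mul_comm])
    (div_le_self (h.seq_pos _).le hc)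

theorem exists_apply_div_lt_average (h : IsLogStaircase a χ)
    (hgap : ∀ j : ℕ, ((j : ℝ) + 1) * (a j + 1) < a (j + 1)) {c : ℝ} (hc : 1 ≤ c) :
    ∃ t > 0, χ (t / c) < (1 / t) * ∫ s in 0..t, χ s := by
  set j := ⌈c⌉₊
  have hcj : c * (a j + 1) ≤ ((j : ℝ) + 1) * (a j + 1) := by
    gcongr
    · linarith [h.one_le_seq j]
    · linarith [Nat.le_ceil c]
  refine ⟨a (j + 1), h.seq_pos _, ?_⟩
  rw [h.apply_seq_succ_div hc (hcj.trans_lt (hgap j))]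
  exact h.inv_two_pow_lt_average (j + 1)

end IsLogStaircase

theorem four_mul_le_of_eq_factorial {a : ℕ → ℝ} (ha0 : a 0 = 1)
    (hak : ∀ k : ℕ, 1 ≤ k → a k = (Nat.factorial (k + 3) : ℝ)) (k : ℕ) :
    4 * a k ≤ a (k + 1) := by
  rcases Nat.eq_zero_or_pos k with rfl | hk
  · norm_num [ha0, hak 1 le_rfl, Nat.factorial]
  rw [hak k hk, hak (k + 1) (by omega), Nat.factorial_succ (k + 3)]
  push_cast
  gcongr
  linarith [k.cast_nonneg (α := ℝ)]

theorem succ_mul_add_one_lt_of_eq_factorial {a : ℕ → ℝ} (ha0 : a 0 = 1)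
    (hak : ∀ k : ℕ, 1 ≤ k → a k = (Nat.factorial (k + 3) : ℝ)) (j : ℕ) :
    ((j : ℝ) + 1) * (a j + 1) < a (j + 1) := by
  rcases Nat.eq_zero_or_pos j with rfl | hj
  · norm_num [ha0, hak 1 le_rfl, Nat.factorial]
  rw [hak j hj, hak (j + 1) (by omega), Nat.factorial_succ (j + 3)]
  have hfac : ((j + 3 : ℕ) : ℝ) ≤ Nat.factorial (j + 3) :=
    mod_cast Nat.self_le_factorial _
  push_cast at hfac ⊢
  nlinarith

theorem stmt18 (γ : ℝ) (hγ : 0 < γ)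
    (a : ℕ → ℝ) (ha0 : a 0 = 1)
    (hak : ∀ k : ℕ, 1 ≤ k → a k = (Nat.factorial (k + 3) : ℝ))
    (χ : ℝ → ℝ)
    (hχlog : ∀ t : ℝ, 0 < t → t ≤ 1 → χ t = Real.log (Real.exp 1 / t))
    (hχlin : ∀ (k : ℕ) (t : ℝ), a k < t → t ≤ a k + 1 →
      χ t = ((2:ℝ) ^ k)⁻¹ * (1 - (t - a k) / 2))
    (hχconst : ∀ (k : ℕ) (t : ℝ), a k + 1 < t → t ≤ a (k + 1) →
      χ t = ((2:ℝ) ^ (k + 1))⁻¹) :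
    (∀ t > (0:ℝ), (1 / t) * ∫ s in (0:ℝ)..t, χ s ≤ 4 * χ (t / 4 ^ (1 / γ))) ∧
    (∀ k : ℕ, 1 ≤ k →
      ((2:ℝ) ^ k)⁻¹ ≤ (1 / a k) * ∫ s in (0:ℝ)..(a k), χ s ∧
        χ (a k / k) = ((2:ℝ) ^ k)⁻¹) ∧
    ¬ ∃ C > (1:ℝ), ∀ t > (0:ℝ),
        (1 / t) * ∫ s in (0:ℝ)..t, χ s ≤ χ (t / C ^ (1 / γ)) := by
  have h : IsLogStaircase a χ :=
    ⟨ha0, four_mul_le_of_eq_factorial ha0 hak, hχlog, hχlin, hχconst⟩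
  have hgap := succ_mul_add_one_lt_of_eq_factorial ha0 hak
  have hexp : 0 ≤ 1 / γ := (one_div_pos.2 hγ).le
  refine ⟨fun t ht => h.average_le (one_le_rpow (by norm_num) hexp) ht,
    fun k hk => ⟨(h.inv_two_pow_lt_average k).le, ?_⟩, ?_⟩
  · obtain ⟨j, rfl⟩ := Nat.exists_eq_add_of_le' hk
    exact_mod_cast h.apply_seq_succ_div (c := j + 1) (by simp) (hgap j)
  · rintro ⟨C, hC, hle⟩
    obtain ⟨t, ht, hlt⟩ := h.exists_apply_div_lt_average hgap (one_le_rpow hC.le hexp)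
    exact (hle t ht).not_gt hlt
end
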